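/- arXiv:1212.6848 — 7 statements merged into one kernel-verified Lean document; each statement's English description precedes it below -/
import Mathlib

section
/- Let G be a connected signed graph with n vertices and m edges. Then G has a balanced subgraph with at least m/2 + (n-1)/4 edges; that is, β(G) ≥ pt(G) = m/2 + (n-1)/4 (the Poljak–Turzík bound). -/
/-- Sign convention: `true` = positive edge, `false` = negative edge.
An edge `e` is *consistent* with the partition `(A, Aᶜ)` of the vertex set if it is
positive when both endpoints lie on the same side and negative otherwise. -/
def SignConsistent {V : Type*} (sign : Sym2 V → Bool) (A : Set V) (e : Sym2 V) : Prop :=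
  ∀ u v : V, e = s(u, v) → (sign e = true ↔ (u ∈ A ↔ v ∈ A))

/-- The number of edges of the balanced subgraph induced by the partition `(A, Aᶜ)`. -/
noncomputable def balCount {V : Type*} (G : SimpleGraph V) (sign : Sym2 V → Bool)
    (A : Set V) : ℕ :=
  {e | e ∈ G.edgeSet ∧ SignConsistent sign A e}.ncard

/-- `beta G sign` = β(G): the maximum number of edges of a balanced subgraph of the
signed graph `(G, sign)`. -/
noncomputable def beta {V : Type*} (G : SimpleGraph V) (sign : Sym2 V → Bool) : ℕ :=
  sSup {n | ∃ A : Set V, n = balCount G sign A}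

/-- The Poljak–Turzík bound `pt G = m/2 + (n − t)/4`, where `m` is the number of edges,
`n` the number of vertices and `t` the number of connected components. -/
noncomputable def pt {V : Type*} (G : SimpleGraph V) : ℚ :=
  (G.edgeSet.ncard : ℚ) / 2 +
    ((Nat.card V : ℚ) - (Nat.card G.ConnectedComponent : ℚ)) / 4

/-- β of the signed subgraph induced on the vertex set `U`. -/
noncomputable def betaOn {V : Type*} (G : SimpleGraph V) (sign : Sym2 V → Bool)
    (U : Set V) : ℕ :=
  beta (G.induce U) (fun e => sign (Sym2.map Subtype.val e))

/-- `pt` of the subgraph induced on the vertex set `U`. -/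
noncomputable def ptOn {V : Type*} (G : SimpleGraph V) (U : Set V) : ℚ :=
  pt (G.induce U)

/-- The signed graph `(G, sign)` is balanced: some partition `(A, Aᶜ)` is consistent
with every edge. -/
def IsBalanced {V : Type*} (G : SimpleGraph V) (sign : Sym2 V → Bool) : Prop :=
  ∃ A : Set V, ∀ u v : V, G.Adj u v → (sign s(u, v) = true ↔ (u ∈ A ↔ v ∈ A))

/-- `a`, `b`, `c` form a positive triangle: all three edges exist and the number of
negative edges among them is even. -/
def PositiveTriangle {V : Type*} (G : SimpleGraph V) (sign : Sym2 V → Bool)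
    (a b c : V) : Prop :=
  G.Adj a b ∧ G.Adj b c ∧ G.Adj c a ∧
    Even ((if sign s(a, b) then 0 else 1) + (if sign s(b, c) then 0 else 1) +
      (if sign s(c, a) then 0 else 1))

/-- `X` is (the vertex set of) a connected component of `G − S`. -/
def IsCompOf {V : Type*} (G : SimpleGraph V) (S X : Set V) : Prop :=
  Disjoint X S ∧ (G.induce X).Connected ∧
    ∀ x ∈ X, ∀ y : V, G.Adj x y → y ∉ S → y ∈ X

/-- The neighborhood of a vertex set `X`. -/
def nbhd {V : Type*} (G : SimpleGraph V) (X : Set V) : Set V :=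
  {v | v ∉ X ∧ ∃ x ∈ X, G.Adj x v}


/-!
Induction on connected vertex sets `U`: there is a partition for which the numbers `c` and `d`
of edges inside `U` that are consistent, resp. inconsistent, with it satisfy
`|U| ≤ 2 (c - d) + 1`; for `U = V` this is `4 β(G) ≥ 2m + n - 1`.
A connected graph on at least two vertices has a non-cut vertex of odd degree, or an edge whose
two endpoints can be deleted without disconnecting it. Delete them, partition the rest by
induction, and put the deleted vertices back one at a time on the side where the majority of
their edges to already placed vertices is consistent. An odd number of `±1`s cannot cancel,
so an odd count raises `c - d` by the `1` the induction needs; for an edge `ab` the count at `a`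
changes parity with the order of insertion, so one of the two orders has an odd count.
-/

open Finset

lemma Finset.sdiff_pair_eq_erase_erase {α : Type*} [DecidableEq α] (s : Finset α) (a b : α) :
    s \ {a, b} = (s.erase b).erase a := by
  ext z
  simp only [mem_sdiff, mem_insert, mem_singleton, mem_erase]
  tauto

namespace SimpleGraph

variable {V : Type*} {G : SimpleGraph V}

lemma connected_induce_insert {s : Set V} (h : (G.induce s).Connected) {x y : V} (hy : y ∈ s)
    (hxy : G.Adj x y) : (G.induce (insert x s)).Connected := by
  rw [← Set.singleton_union]
  exact connected_induce_union (by simp [preconnected_top]) h.preconnected rfl hy hxy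

lemma exists_adj_of_induce_preconnected {s t : Set V} (h : (G.induce s).Preconnected) {p q : V}
    (hp : p ∈ s ∩ t) (hq : q ∈ s \ t) : ∃ x ∈ s ∩ t, ∃ y ∈ s \ t, G.Adj x y := by
  obtain ⟨w⟩ := h ⟨p, hp.1⟩ ⟨q, hq.1⟩
  obtain ⟨d, -, hd₁, hd₂⟩ := w.exists_boundary_dart (Subtype.val ⁻¹' t) hp.2 hq.2
  exact ⟨d.fst, ⟨d.fst.2, hd₁⟩, d.snd, ⟨d.snd.2, hd₂⟩, d.adj⟩

lemma connected_induce_induce_iff {s : Set V} {t : Set s} :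
    ((G.induce s).induce t).Connected ↔ (G.induce (Subtype.val '' t)).Connected :=
  Iso.connected_iff ⟨Equiv.Set.image Subtype.val t Subtype.val_injective, Iff.rfl⟩

lemma exists_connected_induce_diff_singleton {s : Set V} [Finite s] (h : (G.induce s).Connected)
    (hs : s.Nontrivial) : ∃ v ∈ s, (G.induce (s \ {v})).Connected := by
  have : Nontrivial s := hs.coe_sort
  obtain ⟨v, hv⟩ := h.exists_connected_induce_compl_singleton_of_finite_nontrivial
  refine ⟨v, v.2, ?_⟩
  rwa [connected_induce_induce_iff, Set.image_val_compl, Set.image_singleton] at hv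

section DecidableAdj

variable [DecidableEq V] [DecidableRel G.Adj]

lemma filter_adj_subset_erase (U : Finset V) (v : V) : {y ∈ U | G.Adj v y} ⊆ U.erase v :=
  fun _ hy ↦ mem_erase.2 ⟨(G.ne_of_adj (mem_filter.1 hy).2).symm, (mem_filter.1 hy).1⟩

lemma exists_adj_pair_connected_induce_of_erase {U : Finset V} {v a b : V} (hvU : v ∈ U)
    (hv : (G.induce ↑(U.erase v)).Connected) (hN2 : 2 ≤ #{y ∈ U | G.Adj v y})
    (ha : a ∈ U.erase v) (hb : b ∈ U.erase v) (hab : G.Adj a b)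
    (habc : (G.induce ↑(U.erase v \ {a, b})).Connected) :
    ∃ a ∈ U, ∃ b ∈ U, G.Adj a b ∧ (G.induce ↑(U \ {a, b})).Connected := by
  obtain ⟨hav, haU⟩ := mem_erase.1 ha
  obtain ⟨hbv, hbU⟩ := mem_erase.1 hb
  by_cases hout : ∃ y ∈ {y ∈ U | G.Adj v y}, y ∉ ({a, b} : Finset V)
  · obtain ⟨y, hy, hyab⟩ := hout
    refine ⟨a, haU, b, hbU, hab, ?_⟩
    have : U \ {a, b} = insert v (U.erase v \ {a, b}) := by
      ext z; simp only [mem_sdiff, mem_insert, mem_singleton, mem_erase]; grind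
    rw [this, coe_insert]
    exact connected_induce_insert habc (mem_sdiff.2 ⟨filter_adj_subset_erase U v hy, hyab⟩)
      (mem_filter.1 hy).2
  -- Now `v` is adjacent to exactly `a` and `b`, and one of them has a neighbour in
  -- `U \ {v, a, b}`: it keeps that set connected and `v` pairs with the other one.
  push Not at hout
  have hNab : {y ∈ U | G.Adj v y} = {a, b} :=
    eq_of_subset_of_card_le hout (card_le_two.trans hN2)
  have hva : G.Adj v a := (mem_filter.1 (hNab ▸ mem_insert_self a {b})).2
  have hvb : G.Adj v b := (mem_filter.1 (hNab ▸ mem_insert_of_mem (mem_singleton_self b))).2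
  obtain ⟨⟨q, hq⟩⟩ := habc.nonempty
  rw [coe_sdiff] at hq
  obtain ⟨x, hx, y, hy, hxy⟩ := exists_adj_of_induce_preconnected hv.preconnected
    (t := ↑({a, b} : Finset V)) ⟨mem_coe.2 ha, by simp⟩ hq
  rw [← coe_sdiff] at hy
  rcases mem_insert.1 hx.2 with rfl | hxb
  · refine ⟨v, hvU, b, hbU, hvb, ?_⟩
    have : U \ {v, b} = insert x (U.erase v \ {x, b}) := by
      ext z; simp only [mem_sdiff, mem_insert, mem_singleton, mem_erase]; grind
    rw [this, coe_insert]
    exact connected_induce_insert habc hy hxy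
  · obtain rfl := mem_singleton.1 hxb
    refine ⟨v, hvU, a, haU, hva, ?_⟩
    have : U \ {v, a} = insert x (U.erase v \ {a, x}) := by
      ext z; simp only [mem_sdiff, mem_insert, mem_singleton, mem_erase]; grind
    rw [this, coe_insert]
    exact connected_induce_insert habc hy hxy

theorem exists_odd_or_adj_pair_connected_induce {U : Finset V} (hU : (G.induce ↑U).Connected)
    (h2 : 2 ≤ #U) :
    (∃ v ∈ U, Odd #{y ∈ U | G.Adj v y} ∧ (G.induce ↑(U.erase v)).Connected) ∨
      ∃ a ∈ U, ∃ b ∈ U, G.Adj a b ∧ (G.induce ↑(U \ {a, b})).Connected := by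
  induction U using Finset.strongInduction with
  | H U ih =>
  obtain ⟨v, hvU, hv⟩ :=
    exists_connected_induce_diff_singleton hU (one_lt_card_iff_nontrivial.1 h2)
  rw [← coe_erase] at hv
  rw [mem_coe] at hvU
  by_cases hodd : Odd #{y ∈ U | G.Adj v y}
  · exact .inl ⟨v, hvU, hodd, hv⟩
  obtain ⟨y₀, hy₀⟩ : {y ∈ U | G.Adj v y}.Nonempty := by
    obtain ⟨w, hwU, hwv⟩ := exists_mem_ne h2 v
    obtain ⟨x, hx, y, hy, hxy⟩ := exists_adj_of_induce_preconnected hU.preconnected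
      (t := {v}) ⟨mem_coe.2 hvU, rfl⟩ ⟨mem_coe.2 hwU, hwv⟩
    obtain rfl : x = v := hx.2
    exact ⟨y, mem_filter.2 ⟨hy.1, hxy⟩⟩
  have hN2 : 2 ≤ #{y ∈ U | G.Adj v y} := by
    have := card_pos.2 ⟨y₀, hy₀⟩
    rw [Nat.not_odd_iff_even, Nat.even_iff] at hodd
    omega
  rcases ih (U.erase v) (erase_ssubset hvU) hv
      (hN2.trans (card_le_card (filter_adj_subset_erase U v))) with
    ⟨w, hw, hwodd, hwc⟩ | ⟨a, ha, b, hb, hab, habc⟩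
  · obtain ⟨hwv, hwU⟩ := mem_erase.1 hw
    by_cases hvw : G.Adj v w
    · refine .inr ⟨v, hvU, w, hwU, hvw, ?_⟩
      rwa [sdiff_pair_eq_erase_erase, erase_right_comm]
    refine .inl ⟨w, hwU, ?_, ?_⟩
    · rwa [filter_erase, erase_eq_of_notMem fun h ↦ hvw (mem_filter.1 h).2.symm] at hwodd
    · have hy₀' : y₀ ∈ (U.erase v).erase w := by
        refine mem_erase.2 ⟨?_, filter_adj_subset_erase U v hy₀⟩
        rintro rfl
        exact hvw (mem_filter.1 hy₀).2
      rw [← insert_erase (mem_erase.2 ⟨hwv.symm, hvU⟩), erase_right_comm, coe_insert]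
      exact connected_induce_insert hwc hy₀' (mem_filter.1 hy₀).2
  · exact .inr (exists_adj_pair_connected_induce_of_erase hvU hv hN2 ha hb hab habc)

end DecidableAdj

end SimpleGraph

namespace SignedGraph

open scoped Classical

variable {V : Type*} (G : SimpleGraph V) (sign : Sym2 V → Bool)

lemma signConsistent_mk {A : Set V} {x y : V} :
    SignConsistent sign A s(x, y) ↔ (sign s(x, y) = true ↔ (x ∈ A ↔ y ∈ A)) := by
  refine ⟨fun h ↦ h x y rfl, fun h u v huv ↦ ?_⟩
  rcases Sym2.eq_iff.mp huv with ⟨rfl, rfl⟩ | ⟨rfl, rfl⟩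
  · exact h
  · exact h.trans Iff.comm

noncomputable def agreement (A : Set V) (e : Sym2 V) : ℤ :=
  if SignConsistent sign A e then 1 else -1

noncomputable def edgesIn (U : Finset V) : Finset (Sym2 V) := {e ∈ U.sym2 | e ∈ G.edgeSet}

noncomputable def surplus (A : Set V) (U : Finset V) : ℤ :=
  ∑ e ∈ edgesIn G U, agreement sign A e

lemma agreement_congr {A B : Set V} {e : Sym2 V} (h : ∀ x ∈ e, x ∈ A ↔ x ∈ B) :
    agreement sign A e = agreement sign B e := by
  induction e using Sym2.ind with
  | h x y =>
    simp only [agreement, signConsistent_mk, h x (Sym2.mem_mk_left x y),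
      h y (Sym2.mem_mk_right x y)]

lemma agreement_insert_eq_neg_diff {A : Set V} {x y : V} (hxy : x ≠ y) :
    agreement sign (insert x A) s(x, y) = -agreement sign (A \ {x}) s(x, y) := by
  have : SignConsistent sign (insert x A) s(x, y) ↔ ¬SignConsistent sign (A \ {x}) s(x, y) := by
    simp only [signConsistent_mk, Set.mem_insert_iff, Set.mem_sdiff, Set.mem_singleton_iff,
      hxy.symm, true_or, not_true, and_false, false_or]
    tauto
  simp only [agreement, this]
  split_ifs <;> norm_num

lemma sum_agreement (A : Set V) (F : Finset (Sym2 V)) :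
    ∑ e ∈ F, agreement sign A e = 2 * #{e ∈ F | SignConsistent sign A e} - #F := by
  have := card_filter_add_card_filter_not (s := F) (SignConsistent sign A)
  simp only [agreement, sum_ite, sum_const]
  push_cast [← this]
  ring

lemma exists_sum_agreement_ge_card_mod_two (A : Set V) (x : V) (F : Finset (Sym2 V))
    (hF : ∀ e ∈ F, x ∈ e ∧ ¬e.IsDiag) :
    ∃ B : Set V, (∀ z ≠ x, z ∈ B ↔ z ∈ A) ∧
      ((#F % 2 : ℕ) : ℤ) ≤ ∑ e ∈ F, agreement sign B e := by
  have hneg : ∑ e ∈ F, agreement sign (insert x A) e =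
      -∑ e ∈ F, agreement sign (A \ {x}) e := by
    rw [← sum_neg_distrib]
    refine sum_congr rfl fun e he ↦ ?_
    obtain ⟨hx, hdiag⟩ := hF e he
    obtain ⟨y, rfl⟩ := Sym2.mem_iff_exists.mp hx
    exact agreement_insert_eq_neg_diff sign fun h ↦ hdiag (Sym2.mk_isDiag_iff.mpr h)
  have hsum := sum_agreement sign (A \ {x}) F
  by_cases h : ((#F % 2 : ℕ) : ℤ) ≤ ∑ e ∈ F, agreement sign (A \ {x}) e
  · exact ⟨A \ {x}, fun z hz ↦ by simp [hz], h⟩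
  · refine ⟨insert x A, fun z hz ↦ by simp [hz], ?_⟩
    omega

variable {G}

lemma filter_notMem_edgesIn (U : Finset V) (x : V) :
    {e ∈ edgesIn G U | x ∉ e} = edgesIn G (U.erase x) := by
  ext e
  induction e using Sym2.ind with
  | h a b =>
    simp only [edgesIn, mem_filter, mk_mem_sym2_iff, mem_erase, Sym2.mem_iff]
    tauto

lemma card_filter_mem_edgesIn {U : Finset V} {x : V} (hx : x ∈ U) :
    #{e ∈ edgesIn G U | x ∈ e} = #{y ∈ U | G.Adj x y} := by
  have : {e ∈ edgesIn G U | x ∈ e} = {y ∈ U | G.Adj x y}.image (s(x, ·)) := by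
    ext e
    induction e using Sym2.ind with
    | h a b =>
      simp only [edgesIn, mem_filter, mk_mem_sym2_iff, SimpleGraph.mem_edgeSet, mem_image,
        Sym2.mem_iff]
      constructor
      · rintro ⟨⟨⟨ha, hb⟩, hab⟩, rfl | rfl⟩
        · exact ⟨b, ⟨hb, hab⟩, rfl⟩
        · exact ⟨a, ⟨ha, hab.symm⟩, Sym2.eq_swap⟩
      · rintro ⟨y, ⟨hy, hxy⟩, h⟩
        rcases Sym2.eq_iff.1 h with ⟨rfl, rfl⟩ | ⟨rfl, rfl⟩
        · exact ⟨⟨⟨hx, hy⟩, hxy⟩, .inl rfl⟩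
        · exact ⟨⟨⟨hy, hx⟩, hxy.symm⟩, .inr rfl⟩
  rw [this, card_image_of_injective _ fun _ _ ↦ Sym2.congr_right.1]

lemma edgesIn_eq_empty_of_card_le_one {U : Finset V} (hU : #U ≤ 1) : edgesIn G U = ∅ := by
  refine eq_empty_of_forall_notMem fun e he ↦ ?_
  induction e using Sym2.ind with
  | h a b =>
    simp only [edgesIn, mem_filter, mk_mem_sym2_iff, SimpleGraph.mem_edgeSet] at he
    exact he.2.ne (card_le_one.1 hU a he.1.1 b he.1.2)

lemma exists_surplus_erase_add_le {U : Finset V} {x : V} (hx : x ∈ U) (A : Set V) :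
    ∃ B, surplus G sign A (U.erase x) + ((#{y ∈ U | G.Adj x y} % 2 : ℕ) : ℤ) ≤
      surplus G sign B U := by
  obtain ⟨B, hBA, hB⟩ := exists_sum_agreement_ge_card_mod_two sign A x {e ∈ edgesIn G U | x ∈ e}
    fun e he ↦ ⟨(mem_filter.1 he).2,
      G.not_isDiag_of_mem_edgeSet (mem_filter.1 (mem_filter.1 he).1).2⟩
  refine ⟨B, ?_⟩
  have hrest : surplus G sign A (U.erase x) = surplus G sign B (U.erase x) := by
    refine sum_congr rfl fun e he ↦ agreement_congr sign fun z hz ↦ (hBA z ?_).symm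
    rw [edgesIn, mem_filter, mem_sym2_iff] at he
    exact (mem_erase.1 (he.1 z hz)).1
  rw [hrest, ← card_filter_mem_edgesIn hx]
  unfold surplus
  rw [← sum_filter_add_sum_filter_not (edgesIn G U) (x ∈ ·), filter_notMem_edgesIn]
  linarith

lemma exists_surplus_sdiff_pair_add_one_le {U : Finset V} {a b : V} (ha : a ∈ U) (hb : b ∈ U)
    (hab : G.Adj a b) (A : Set V) :
    ∃ B, surplus G sign A (U \ {a, b}) + 1 ≤ surplus G sign B U := by
  have ordered : ∀ a b, a ∈ U → b ∈ U → a ≠ b → ∃ B, surplus G sign A (U \ {a, b}) +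
      ((#{y ∈ U.erase b | G.Adj a y} % 2 : ℕ) : ℤ) + ((#{y ∈ U | G.Adj b y} % 2 : ℕ) : ℤ) ≤
        surplus G sign B U := by
    intro a b ha hb hab
    obtain ⟨B₁, hB₁⟩ := exists_surplus_erase_add_le sign (mem_erase.2 ⟨hab, ha⟩) A
    obtain ⟨B₂, hB₂⟩ := exists_surplus_erase_add_le sign hb B₁
    rw [sdiff_pair_eq_erase_erase]
    exact ⟨B₂, by linarith⟩
  obtain ⟨B, hB⟩ := ordered a b ha hb hab.ne
  obtain ⟨B', hB'⟩ := ordered b a hb ha hab.ne.symm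
  have hcard : #{y ∈ U.erase b | G.Adj a y} + 1 = #{y ∈ U | G.Adj a y} := by
    rw [filter_erase, card_erase_add_one (mem_filter.2 ⟨hb, hab⟩)]
  rw [pair_comm] at hB'
  by_cases h : #{y ∈ U.erase b | G.Adj a y} % 2 + #{y ∈ U | G.Adj b y} % 2 = 0
  · exact ⟨B', by omega⟩
  · exact ⟨B, by omega⟩

theorem exists_card_le_two_mul_surplus_add_one {U : Finset V} (hU : (G.induce ↑U).Connected) :
    ∃ A, (#U : ℤ) ≤ 2 * surplus G sign A U + 1 := by
  induction U using Finset.strongInduction with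
  | H U ih =>
  rcases lt_or_ge #U 2 with hU1 | hU2
  · refine ⟨∅, ?_⟩
    rw [surplus, edgesIn_eq_empty_of_card_le_one (by omega), sum_empty]
    omega
  rcases SimpleGraph.exists_odd_or_adj_pair_connected_induce hU hU2 with
    ⟨v, hv, hodd, hconn⟩ | ⟨a, ha, b, hb, hab, hconn⟩
  · obtain ⟨A, hA⟩ := ih _ (erase_ssubset hv) hconn
    obtain ⟨B, hB⟩ := exists_surplus_erase_add_le sign hv A
    rw [Nat.odd_iff.mp hodd] at hB
    rw [card_erase_of_mem hv] at hA
    exact ⟨B, by omega⟩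
  · have hab_sub : {a, b} ⊆ U := by simp [insert_subset_iff, ha, hb]
    obtain ⟨A, hA⟩ := ih _ (sdiff_ssubset hab_sub (by simp)) hconn
    obtain ⟨B, hB⟩ := exists_surplus_sdiff_pair_add_one_le sign ha hb hab A
    rw [card_sdiff_of_subset hab_sub, card_pair hab.ne] at hA
    exact ⟨B, by omega⟩

variable (G)

lemma surplus_univ [Fintype V] (A : Set V) :
    surplus G sign A univ = 2 * (balCount G sign A : ℤ) - G.edgeSet.ncard := by
  have hE : edgesIn G univ = G.edgeSet.toFinset := by
    ext e
    simp [edgesIn]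
  rw [surplus, sum_agreement, hE, balCount, Set.ncard_eq_toFinset_card',
    Set.ncard_eq_toFinset_card']
  congr 4
  ext e
  simp

lemma balCount_le_beta [Finite V] (A : Set V) : balCount G sign A ≤ beta G sign :=
  le_csSup ⟨G.edgeSet.ncard, by rintro _ ⟨A', rfl⟩; exact Set.ncard_le_ncard fun e h ↦ h.1⟩
    ⟨A, rfl⟩

lemma pt_eq_of_connected (h : G.Connected) :
    pt G = (G.edgeSet.ncard : ℚ) / 2 + ((Nat.card V : ℚ) - 1) / 4 := by
  have : Nat.card G.ConnectedComponent = 1 :=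
    Nat.card_eq_one_iff_unique.2
      ⟨h.preconnected.subsingleton_connectedComponent, h.nonempty.map G.connectedComponentMk⟩
  rw [pt, this, Nat.cast_one]

end SignedGraph

/-- Poljak–Turzík bound. A connected signed graph with `n` vertices and
`m` edges has a balanced subgraph with at least `m/2 + (n-1)/4` edges, i.e.
`β(G) ≥ pt(G) = m/2 + (n-1)/4`. -/
theorem stmt0 {V : Type*} [Fintype V] (G : SimpleGraph V) (sign : Sym2 V → Bool)
    (hconn : G.Connected) :
    pt G = (G.edgeSet.ncard : ℚ) / 2 + ((Fintype.card V : ℚ) - 1) / 4 ∧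
      (beta G sign : ℚ) ≥ pt G := by
  have hpt := SignedGraph.pt_eq_of_connected G hconn
  rw [Nat.card_eq_fintype_card] at hpt
  refine ⟨hpt, ?_⟩
  have hU : (G.induce ↑(Finset.univ : Finset V)).Connected := by
    rw [Finset.coe_univ]
    exact (SimpleGraph.induceUnivIso G).connected_iff.2 hconn
  obtain ⟨A, hA⟩ := SignedGraph.exists_card_le_two_mul_surplus_add_one sign hU
  rw [SignedGraph.surplus_univ, Finset.card_univ] at hA
  have hβ := SignedGraph.balCount_le_beta G sign A
  rw [hpt, ge_iff_le]
  qify at hA hβ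
  linarith
end

section
/- A signed graph G is balanced if and only if every cycle of G is positive, i.e., every cycle of G contains an even number of negative edges. -/
/-!
Along any walk in a balanced signed graph, each negative edge switches sides of the partition
and each positive edge stays, so the parity of the number of negative edges of a walk records
whether its endpoints lie on the same side; closed walks, in particular cycles, are positive.
Conversely, a closed walk that is not a cycle splits at a repeated vertex into two shorter
closed walks (or retraces a single edge), so if all cycles are positive then so are all closed
walks. Then two walks with the same endpoints have negative counts of the same parity, and
putting each vertex on the side given by the parity of a walk from a fixed root of its
component balances the graph.
-/

namespace SimpleGraph.Walk

variable {V : Type*} {G : SimpleGraph V} (sign : Sym2 V → Bool)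

def negCount {u v : V} (w : G.Walk u v) : ℕ :=
  w.edges.countP (fun e => !sign e)

@[simp]
lemma negCount_nil {u : V} : (nil : G.Walk u u).negCount sign = 0 := rfl

@[simp]
lemma negCount_cons {u v x : V} (h : G.Adj u v) (w : G.Walk v x) :
    (cons h w).negCount sign = w.negCount sign + if sign s(u, v) then 0 else 1 := by
  cases hs : sign s(u, v) <;> simp [negCount, hs]

@[simp]
lemma negCount_append {u v x : V} (w₁ : G.Walk u v) (w₂ : G.Walk v x) :
    (w₁.append w₂).negCount sign = w₁.negCount sign + w₂.negCount sign := by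
  simp [negCount, List.countP_append]

@[simp]
lemma negCount_reverse {u v : V} (w : G.Walk u v) :
    w.reverse.negCount sign = w.negCount sign := by
  simp [negCount, List.countP_reverse]

lemma even_negCount_iff_mem_iff_mem {A : Set V}
    (hA : ∀ u v : V, G.Adj u v → (sign s(u, v) = true ↔ (u ∈ A ↔ v ∈ A))) {u v : V}
    (w : G.Walk u v) : Even (w.negCount sign) ↔ (u ∈ A ↔ v ∈ A) := by
  induction w with
  | nil => simp
  | @cons a b c h w ih =>
    have hab := hA a b h
    cases hs : sign s(a, b) <;> simp [hs, Nat.even_add_one, ih] at hab ⊢ <;> tauto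

lemma even_negCount_of_forall_isCycle
    (hcyc : ∀ (u : V) (c : G.Walk u u), c.IsCycle → Even (c.negCount sign)) :
    ∀ {u : V} (c : G.Walk u u), Even (c.negCount sign) := by
  intro u c
  induction hn : c.length using Nat.strong_induction_on generalizing u c with
  | _ n ih =>
  cases c with
  | nil => simp
  | @cons _ b _ h q =>
    by_cases hq : q.IsPath
    · by_cases he : s(u, b) ∈ q.edges
      · rw [hq.eq_adj_toWalk_of_mem_edges (Sym2.eq_swap ▸ he)]
        cases hs : sign s(u, b) <;> simp [Adj.toWalk, Sym2.eq_swap, hs]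
      · exact hcyc _ _ ((cons_isCycle_iff q h).mpr ⟨hq, he⟩)
    · obtain ⟨x, c, ⟨ru, rv, rfl⟩, hc⟩ : ∃ (x : V) (c : G.Walk x x), c.IsSubwalk q ∧ ¬c.Nil := by
        simpa [isPath_iff_isSubwalk_imp_nil] using hq
      have hc₀ : 0 < c.length := not_nil_iff_lt_length.mp hc
      have h₁ := ih _ (by simp at hn ⊢; omega) (cons h (ru.append rv)) rfl
      have h₂ := ih _ (by simp at hn ⊢; omega) c rfl
      have hsplit : (cons h ((ru.append c).append rv)).negCount sign =
          (cons h (ru.append rv)).negCount sign + c.negCount sign := by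
        simp only [negCount_cons, negCount_append]
        ring
      exact hsplit ▸ h₁.add h₂

lemma even_negCount_iff_of_forall_closed
    (hclosed : ∀ {u : V} (c : G.Walk u u), Even (c.negCount sign)) {u v : V}
    (w₁ w₂ : G.Walk u v) : Even (w₁.negCount sign) ↔ Even (w₂.negCount sign) := by
  have h := hclosed (w₁.append w₂.reverse)
  rw [negCount_append, negCount_reverse] at h
  exact Nat.even_add.mp h

end SimpleGraph.Walk

open SimpleGraph Walk

lemma isBalanced_of_forall_even_negCount {V : Type*} {G : SimpleGraph V}
    {sign : Sym2 V → Bool}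
    (hclosed : ∀ {u : V} (c : G.Walk u u), Even (c.negCount sign)) : IsBalanced G sign := by
  let root (v : V) : V := (G.connectedComponentMk v).out
  refine ⟨{v | ∃ w : G.Walk (root v) v, Even (w.negCount sign)}, fun u v h => ?_⟩
  have hroot : root v = root u := by
    simp only [root, ConnectedComponent.sound h.reachable.symm]
  obtain ⟨p⟩ : G.Reachable (root u) u := ConnectedComponent.exact (Quot.out_eq _)
  have mem_iff {x : V} (w : G.Walk (root u) x) (hx : root x = root u) :
      (∃ w' : G.Walk (root x) x, Even (w'.negCount sign)) ↔ Even (w.negCount sign) := by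
    rw [hx]
    exact ⟨fun ⟨w', hw'⟩ => (even_negCount_iff_of_forall_closed sign hclosed w' w).mp hw',
      fun hw => ⟨w, hw⟩⟩
  simp only [Set.mem_ofPred_eq, mem_iff p rfl, mem_iff (p.concat h) hroot, concat_eq_append,
    negCount_append]
  cases hs : sign s(u, v) <;> simp [hs, Nat.even_add_one, -Nat.not_even_iff_odd]

theorem stmt1_general {V : Type*} (G : SimpleGraph V) (sign : Sym2 V → Bool) :
    IsBalanced G sign ↔
      ∀ (u : V) (w : G.Walk u u), w.IsCycle →
        Even (w.edges.countP (fun e => !sign e)) := by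
  constructor
  · rintro ⟨A, hA⟩ u w -
    exact (even_negCount_iff_mem_iff_mem sign hA w).mpr Iff.rfl
  · intro hcyc
    exact isBalanced_of_forall_even_negCount (even_negCount_of_forall_isCycle sign hcyc)

/-- Harary. A signed graph is balanced if and only if every cycle is
positive, i.e. every cycle contains an even number of negative edges. -/
theorem stmt1 {V : Type*} [Fintype V] (G : SimpleGraph V) (sign : Sym2 V → Bool) :
    IsBalanced G sign ↔
      ∀ (u : V) (w : G.Walk u u), w.IsCycle →
        Even (w.edges.countP (fun e => !sign e)) :=
  stmt1_general G sign
end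

section
/- Let G be a signed graph whose underlying graph is chordal, i.e., every cycle of length at least four has a chord. Then the dual Ḡ of G is balanced if and only if G contains no positive triangle, i.e., no 3-cycle with an even number of negative edges. -/
/-- A graph is chordal: every cycle of length at least four has a chord, i.e. an edge
between two vertices of the cycle which is not an edge of the cycle. -/
def IsChordal {V : Type*} (G : SimpleGraph V) : Prop :=
  ∀ (u : V) (w : G.Walk u u), w.IsCycle → 4 ≤ w.length →
    ∃ a b : V, a ∈ w.support ∧ b ∈ w.support ∧ G.Adj a b ∧ s(a, b) ∉ w.edges

/-!
Encode a sign function by the parity `negParity s e ∈ ZMod 2` of negative edges. A signed graph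
is balanced exactly when this parity is a coboundary `e = s(u, v) ↦ g u + g v`, which happens
exactly when it sums to zero around every closed walk. Removing loops from a walk (`Walk.bypass`)
only discards cycles and edges traversed back and forth, so it suffices that it sums to zero
around every cycle; and in a chordal graph a chord cuts a cycle into two shorter cycles sharing
one edge, so by induction it suffices that it sums to zero around every triangle. Passing to the
dual adds `1` on each edge, so a positive triangle of `G` is exactly a triangle of odd parity in
the dual.
-/

open SimpleGraph

namespace SimpleGraph.Walk

variable {V M : Type*} {G : SimpleGraph V}

section AddCommMonoid

variable [AddCommMonoid M] (f : Sym2 V → M)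

def edgeSum {u v : V} (p : G.Walk u v) : M := (p.edges.map f).sum

@[simp]
lemma edgeSum_nil {u : V} : (nil : G.Walk u u).edgeSum f = 0 := rfl

@[simp]
lemma edgeSum_cons {u v w : V} (h : G.Adj u v) (p : G.Walk v w) :
    (cons h p).edgeSum f = f s(u, v) + p.edgeSum f := by
  simp [edgeSum]

lemma edgeSum_append {u v w : V} (p : G.Walk u v) (q : G.Walk v w) :
    (p.append q).edgeSum f = p.edgeSum f + q.edgeSum f := by
  simp [edgeSum]

@[simp]
lemma edgeSum_reverse {u v : V} (p : G.Walk u v) : p.reverse.edgeSum f = p.edgeSum f := by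
  simp [edgeSum, List.sum_reverse]

lemma edgeSum_rotate [DecidableEq V] {u v : V} (c : G.Walk v v) (h : u ∈ c.support) :
    (c.rotate u h).edgeSum f = c.edgeSum f :=
  ((c.rotate_edges u h).perm.map f).sum_eq

end AddCommMonoid

section ZModTwo

variable [DecidableEq V] {f : Sym2 V → ZMod 2}

lemma edgeSum_cons_eq_zero_of_isPath (hf : ∀ u (c : G.Walk u u), c.IsCycle → c.edgeSum f = 0)
    {u v : V} (h : G.Adj u v) {p : G.Walk v u} (hp : p.IsPath) : (cons h p).edgeSum f = 0 := by
  by_cases he : s(u, v) ∈ p.edges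
  · rw [hp.eq_adj_toWalk_of_mem_edges (Sym2.eq_swap ▸ he)]
    simp [Sym2.eq_swap, CharTwo.add_self_eq_zero]
  · exact hf u _ ((cons_isCycle_iff p h).mpr ⟨hp, he⟩)

lemma edgeSum_bypass (hf : ∀ u (c : G.Walk u u), c.IsCycle → c.edgeSum f = 0) {u v : V}
    (p : G.Walk u v) : p.bypass.edgeSum f = p.edgeSum f := by
  induction p with
  | nil => rfl
  | @cons u v w h p ih =>
    rw [bypass, edgeSum_cons, ← ih]
    split_ifs with hu
    · have hloop := edgeSum_cons_eq_zero_of_isPath hf h ((bypass_isPath p).takeUntil hu)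
      conv_rhs => rw [← p.bypass.take_spec hu, edgeSum_append, ← add_assoc, ← edgeSum_cons f h,
        hloop, zero_add]
    · exact edgeSum_cons f h _

lemma edgeSum_eq_zero_of_forall_isCycle (hf : ∀ u (c : G.Walk u u), c.IsCycle → c.edgeSum f = 0)
    {u : V} (w : G.Walk u u) : w.edgeSum f = 0 := by
  rw [← edgeSum_bypass hf, (isPath_iff_nil.mp (bypass_isPath w)).eq_nil, edgeSum_nil]

lemma IsCycle.isCycle_cons_dropUntil {a b : V} {c : G.Walk a a} (hc : c.IsCycle)
    (hb : b ∈ c.support) (hab : G.Adj a b) (hchord : s(a, b) ∉ c.edges) :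
    (cons hab (c.dropUntil b hb)).IsCycle := by
  refine (cons_isCycle_iff _ hab).mpr ⟨?_, fun h => hchord (c.edges_dropUntil_subset_edges hb h)⟩
  have hsplit : ((c.takeUntil b hb).append (c.dropUntil b hb)).IsCycle := by rwa [c.take_spec hb]
  exact hsplit.isPath_of_append_right (not_nil_of_ne hab.ne)

lemma IsCycle.isCycle_cons_reverse_takeUntil {a b : V} {c : G.Walk a a} (hc : c.IsCycle)
    (hb : b ∈ c.support) (hab : G.Adj a b) (hchord : s(a, b) ∉ c.edges) :
    (cons hab (c.takeUntil b hb).reverse).IsCycle := by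
  refine (cons_isCycle_iff _ hab).mpr ⟨(hc.isPath_takeUntil hb).reverse, fun h => ?_⟩
  rw [edges_reverse, List.mem_reverse] at h
  exact hchord (c.edges_takeUntil_subset_edges hb h)

end ZModTwo

end SimpleGraph.Walk

namespace IsChordal

open Walk

variable {V : Type*} [DecidableEq V] {G : SimpleGraph V}

theorem edgeSum_eq_zero_of_isCycle (hG : IsChordal G) {f : Sym2 V → ZMod 2}
    (hf : ∀ a b c, G.Adj a b → G.Adj b c → G.Adj c a → f s(a, b) + f s(b, c) + f s(c, a) = 0)
    {u : V} {c : G.Walk u u} (hc : c.IsCycle) : c.edgeSum f = 0 := by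
  induction hn : c.length using Nat.strong_induction_on generalizing u with
  | _ n ih =>
  obtain h3 | h4 := hc.three_le_length.eq_or_lt
  · rcases c with _ | ⟨h₁, _ | ⟨h₂, _ | ⟨h₃, _ | ⟨_, _⟩⟩⟩⟩ <;> simp at h3
    simpa [add_assoc] using hf _ _ _ h₁ h₂ h₃
  · obtain ⟨a, b, ha, hb, hab, hchord⟩ := hG u c hc (by omega)
    rw [← edgeSum_rotate f c ha]
    set c' := c.rotate a ha
    have hc' : c'.IsCycle := hc.rotate ha
    have hb' : b ∈ c'.support := (mem_support_rotate_iff c a ha).mpr hb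
    have hchord' : s(a, b) ∉ c'.edges := fun h => hchord ((c.rotate_edges a ha).perm.mem_iff.mp h)
    have hlen := congrArg length (c'.take_spec hb')
    rw [length_append, length_rotate, hn] at hlen
    have hdrop := hc'.isCycle_cons_dropUntil hb' hab hchord'
    have htake := hc'.isCycle_cons_reverse_takeUntil hb' hab hchord'
    have h₁ := ih _ (by have := hdrop.three_le_length; simp at this ⊢; omega) htake rfl
    have h₂ := ih _ (by have := htake.three_le_length; simp at this ⊢; omega) hdrop rfl
    simp only [edgeSum_cons, edgeSum_reverse] at h₁ h₂
    rw [← c'.take_spec hb', edgeSum_append]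
    grind

end IsChordal

section Potential

open Walk

variable {V : Type*} {G : SimpleGraph V}

theorem exists_potential_of_forall_edgeSum_eq_zero {f : Sym2 V → ZMod 2}
    (hf : ∀ u (w : G.Walk u u), w.edgeSum f = 0) :
    ∃ g : V → ZMod 2, ∀ u v, G.Adj u v → f s(u, v) = g u + g v := by
  have hroot (v : V) : G.Reachable (Quot.out (G.connectedComponentMk v)) v :=
    ConnectedComponent.exact (Quot.out_eq _)
  refine ⟨fun v => (hroot v).some.edgeSum f, fun u v huv => ?_⟩
  -- the roots chosen for `u` and `v` agree only propositionally
  have key : ∀ {x y : V} (p : G.Walk x u) (q : G.Walk y v), x = y →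
      f s(u, v) = p.edgeSum f + q.edgeSum f := by
    rintro x _ p q rfl
    have := hf x (p.append (cons huv q.reverse))
    rw [edgeSum_append, edgeSum_cons, edgeSum_reverse] at this
    grind
  exact key _ _ (congrArg _ (ConnectedComponent.sound huv.reachable))

def negParity (s : Sym2 V → Bool) (e : Sym2 V) : ZMod 2 := if s e then 0 else 1

lemma negParity_eq_add_iff (s : Sym2 V → Bool) (e : Sym2 V) (a b : ZMod 2) :
    negParity s e = a + b ↔ (s e = true ↔ (a = 1 ↔ b = 1)) := by
  unfold negParity
  generalize s e = t
  revert t a b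
  decide

theorem isBalanced_iff_exists_potential (s : Sym2 V → Bool) :
    IsBalanced G s ↔ ∃ g : V → ZMod 2, ∀ u v, G.Adj u v → negParity s s(u, v) = g u + g v := by
  classical
  constructor
  · rintro ⟨A, hA⟩
    refine ⟨fun x => if x ∈ A then 1 else 0, fun u v huv => ?_⟩
    simpa [negParity_eq_add_iff] using hA u v huv
  · rintro ⟨g, hg⟩
    exact ⟨{x | g x = 1}, fun u v huv => (negParity_eq_add_iff s _ _ _).mp (hg u v huv)⟩

theorem positiveTriangle_iff {sign : Sym2 V → Bool} {a b c : V} :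
    PositiveTriangle G sign a b c ↔ G.Adj a b ∧ G.Adj b c ∧ G.Adj c a ∧
      negParity (fun e => !sign e) s(a, b) + negParity (fun e => !sign e) s(b, c) +
        negParity (fun e => !sign e) s(c, a) ≠ 0 := by
  refine and_congr_right fun _ => and_congr_right fun _ => and_congr_right fun _ => ?_
  have parity : ∀ x y z : Bool,
      Even ((if x then 0 else 1) + (if y then 0 else 1) + (if z then 0 else 1)) ↔
        (if !x then 0 else 1 : ZMod 2) + (if !y then 0 else 1) + (if !z then 0 else 1) ≠ 0 := by
    decide
  exact parity _ _ _

end Potential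

theorem stmt3_general {V : Type*} (G : SimpleGraph V) (sign : Sym2 V → Bool)
    (hchordal : IsChordal G) :
    IsBalanced G (fun e => !sign e) ↔
      ¬ ∃ a b c : V, PositiveTriangle G sign a b c := by
  classical
  rw [isBalanced_iff_exists_potential]
  constructor
  · rintro ⟨g, hg⟩ ⟨a, b, c, hpos⟩
    obtain ⟨hab, hbc, hca, hodd⟩ := positiveTriangle_iff.mp hpos
    rw [hg a b hab, hg b c hbc, hg c a hca] at hodd
    grind
  · intro hno
    refine exists_potential_of_forall_edgeSum_eq_zero fun _ w =>
      Walk.edgeSum_eq_zero_of_forall_isCycle (fun _ _ hc => hchordal.edgeSum_eq_zero_of_isCycle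
        (fun a b c hab hbc hca => ?_) hc) w
    by_contra h
    exact hno ⟨a, b, c, positiveTriangle_iff.mpr ⟨hab, hbc, hca, h⟩⟩

/-- If the underlying graph of a signed graph `G` is chordal, then the
dual of `G` is balanced if and only if `G` contains no positive triangle. -/
theorem stmt3 {V : Type*} [Fintype V] (G : SimpleGraph V) (sign : Sym2 V → Bool)
    (hchordal : IsChordal G) :
    IsBalanced G (fun e => !sign e) ↔
      ¬ ∃ a b c : V, PositiveTriangle G sign a b c :=
  stmt3_general G sign hchordal
end

section
/- Let G be a signed graph and X ⊆ V(G) a vertex set such that the induced signed subgraph G[X] is chordal and contains no positive triangle. Then there exists W ⊆ X such that in the W-switch G_W every edge with both endpoints in X is negative. -/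
open Classical in
/-- The sign function of the `W`-switch `G_W`: the sign of every edge with exactly one
endpoint in `W` is flipped. -/
noncomputable def switchSign {V : Type*} (sign : Sym2 V → Bool) (W : Set V) :
    Sym2 V → Bool :=
  fun e => if ∃ u v : V, e = s(u, v) ∧ u ∈ W ∧ v ∉ W then !sign e else sign e

/-!
Negating every sign turns the claim into balance of `G[X]`, and a signed graph is balanced
as soon as every closed walk has an even number of negative edges (Harary): give each vertex
the parity of the negative edges on a walk to it from a fixed root of its component.
After negation, "no positive triangle" says that every triangle of `G[X]` has an even number
of negative edges, and chordality propagates this to all closed walks, by induction on the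
length: a closed walk that is not a cycle is a back-and-forth along one edge or splits off a
shorter closed walk, and a chord cuts a cycle of length at least four into two shorter closed
walks whose edges are those of the cycle together with the chord taken twice.
-/

lemma List.even_countP_pair {α : Type*} (p : α → Bool) (a : α) :
    Even ([a, a].countP p) := by
  cases h : p a <;> simp [h]

namespace SimpleGraph

variable {V : Type*} {G : SimpleGraph V}

def IsChordal (G : SimpleGraph V) : Prop :=
  ∀ (u : V) (w : G.Walk u u), w.IsCycle → 4 ≤ w.length →
    ∃ a b : V, a ∈ w.support ∧ b ∈ w.support ∧ G.Adj a b ∧ s(a, b) ∉ w.edges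

namespace Walk

lemma exists_eq_append_loop_append_of_not_isPath {u v : V} :
    ∀ (w : G.Walk u v), ¬ w.IsPath →
      ∃ (x : V) (p : G.Walk u x) (c : G.Walk x x) (q : G.Walk x v),
        ¬ c.Nil ∧ w = p.append (c.append q)
  | nil, hw => absurd IsPath.nil hw
  | cons h w, hw => by
    classical
    by_cases hpath : w.IsPath
    · have hu : u ∈ w.support := by
        by_contra hu
        exact hw (hpath.cons hu)
      refine ⟨u, nil, cons h (w.takeUntil u hu), w.dropUntil u hu, not_nil_cons, ?_⟩
      simp [take_spec]
    · obtain ⟨x, p, c, q, hc, rfl⟩ := exists_eq_append_loop_append_of_not_isPath w hpath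
      exact ⟨x, cons h p, c, q, hc, rfl⟩

lemma edges_eq_of_length_eq_one {u v : V} : ∀ {p : G.Walk u v}, p.length = 1 →
    p.edges = [s(u, v)]
  | cons _ nil, _ => rfl

lemma exists_edges_eq_of_length_eq_three {u v : V} : ∀ {p : G.Walk u v}, p.length = 3 →
    ∃ b c, G.Adj u b ∧ G.Adj b c ∧ G.Adj c v ∧ p.edges = [s(u, b), s(b, c), s(c, v)]
  | cons h₁ (cons h₂ (cons h₃ nil)), _ => ⟨_, _, h₁, h₂, h₃, rfl⟩

lemma exists_shorter_loops_of_chord {u a b : V} (w : G.Walk u u) (ha : a ∈ w.support)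
    (hb : b ∈ w.support) (hab : G.Adj a b) (hnot : s(a, b) ∉ w.edges) :
    ∃ w₁ w₂ : G.Walk a a, w₁.length < w.length ∧ w₂.length < w.length ∧
      (w₁.edges ++ w₂.edges).Perm (w.edges ++ [s(a, b), s(a, b)]) := by
  classical
  have hb' : b ∈ (w.rotate a ha).support := (mem_support_rotate_iff ..).mpr hb
  obtain ⟨p, q, hpq⟩ := mem_support_iff_exists_append.mp hb'
  have hperm : (p.edges ++ q.edges).Perm w.edges := by
    rw [← edges_append, ← hpq]; exact (rotate_edges ..).perm
  have hlen : p.length + q.length = w.length := by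
    rw [← length_append, ← hpq, length_rotate]
  have hp : 2 ≤ p.length := by
    have h0 : p.length ≠ 0 := fun h => hab.ne (eq_of_length_eq_zero h)
    have h1 : p.length ≠ 1 := fun h => hnot <| hperm.subset <| List.mem_append_left _ <| by
      simp [edges_eq_of_length_eq_one h]
    omega
  have hq : 2 ≤ q.length := by
    have h0 : q.length ≠ 0 := fun h => hab.ne (eq_of_length_eq_zero h).symm
    have h1 : q.length ≠ 1 := fun h => hnot <| hperm.subset <| List.mem_append_right _ <| by
      simp [edges_eq_of_length_eq_one h, Sym2.eq_swap]
    omega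
  refine ⟨p.concat hab.symm, cons hab q, by simp; omega, by simp; omega, ?_⟩
  simp only [edges_concat, edges_cons, Sym2.eq_swap (a := b)]
  refine List.Perm.trans ?_ (hperm.append_right _)
  simp [List.perm_iff_count, List.count_cons]
  omega

end Walk

open Walk in
theorem IsChordal.even_countP_edges (hG : G.IsChordal) (σ : Sym2 V → Bool)
    (htri : ∀ a b c, G.Adj a b → G.Adj b c → G.Adj c a →
      Even ([s(a, b), s(b, c), s(c, a)].countP σ))
    {u : V} (w : G.Walk u u) : Even (w.edges.countP σ) := by
  induction hn : w.length using Nat.strong_induction_on generalizing u with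
  | _ n ih =>
  replace ih : ∀ {x} (c : G.Walk x x), c.length < n → Even (c.edges.countP σ) :=
    fun c hc => ih _ hc c rfl
  subst hn
  by_cases hcyc : w.IsCycle
  · rcases hcyc.three_le_length.eq_or_lt with h3 | h4
    · obtain ⟨b, c, hub, hbc, hcu, he⟩ := exists_edges_eq_of_length_eq_three h3.symm
      rw [he]
      exact htri u b c hub hbc hcu
    · obtain ⟨a, b, ha, hb, hab, hnot⟩ := hG u w hcyc h4
      obtain ⟨w₁, w₂, h₁, h₂, hperm⟩ := w.exists_shorter_loops_of_chord ha hb hab hnot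
      have hsum := hperm.countP_eq σ
      rw [List.countP_append, List.countP_append] at hsum
      exact (Nat.even_add.mp (hsum ▸ (ih w₁ h₁).add (ih w₂ h₂))).mpr
        (List.even_countP_pair ..)
  · cases w with
    | nil => simp
    | @cons _ v _ h r =>
      by_cases hr : r.IsPath
      · have he : s(u, v) ∈ r.edges := by
          by_contra he
          exact hcyc ((cons_isCycle_iff r h).mpr ⟨hr, he⟩)
        rw [edges_cons, hr.eq_adj_toWalk_of_mem_edges (Sym2.eq_swap ▸ he)]
        simpa [Sym2.eq_swap] using List.even_countP_pair σ s(u, v)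
      · obtain ⟨x, p, c, q, hc, rfl⟩ := r.exists_eq_append_loop_append_of_not_isPath hr
        have hc' := not_nil_iff_lt_length.mp hc
        have hloop := ih c (by simp; omega)
        have hrest := ih (cons h (p.append q)) (by simp; omega)
        simp only [edges_cons, edges_append, List.countP_cons, List.countP_append] at hrest ⊢
        rw [Nat.even_iff] at hloop hrest ⊢
        omega

lemma even_countP_edges_iff_of_forall_loop_even {σ : Sym2 V → Bool}
    (h : ∀ u (c : G.Walk u u), Even (c.edges.countP σ)) {a b : V} (p q : G.Walk a b) :
    Even (p.edges.countP σ) ↔ Even (q.edges.countP σ) := by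
  have := h a (p.append q.reverse)
  rwa [Walk.edges_append, Walk.edges_reverse, List.countP_append, List.countP_reverse,
    Nat.even_add] at this

theorem isBalanced_of_forall_loop_even (sign : Sym2 V → Bool)
    (h : ∀ u (c : G.Walk u u), Even (c.edges.countP fun e => !sign e)) : IsBalanced G sign := by
  have hroot : ∀ v, G.Reachable (G.connectedComponentMk v).out v :=
    fun v => ConnectedComponent.exact (G.connectedComponentMk v).out_eq
  refine ⟨{v | Even ((hroot v).some.edges.countP fun e => !sign e)}, fun u v huv => ?_⟩
  have hcomp := ConnectedComponent.connectedComponentMk_eq_of_adj huv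
  have key := even_countP_edges_iff_of_forall_loop_even h
    (((hroot u).some.concat huv).copy (congrArg Quot.out hcomp) rfl) (hroot v).some
  simp only [Walk.edges_copy, Walk.edges_concat, List.concat_eq_append, List.countP_append]
    at key
  simp only [Set.mem_ofPred_eq, ← key]
  cases hs : sign s(u, v) <;> simp [hs, Nat.even_add_one, -Nat.not_even_iff_odd]

lemma isChordal_induce {X : Set V}
    (h : ∀ (u : V) (w : G.Walk u u), w.IsCycle → (∀ x ∈ w.support, x ∈ X) →
      4 ≤ w.length →
      ∃ a b : V, a ∈ w.support ∧ b ∈ w.support ∧ G.Adj a b ∧ s(a, b) ∉ w.edges) :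
    (G.induce X).IsChordal := by
  intro u w hw h4
  have hinj := (Embedding.induce (G := G) X).injective
  obtain ⟨a, b, ha, hb, hab, hnot⟩ := h _ (w.map (Embedding.induce (G := G) X).toHom)
    ((Walk.isCycle_map_iff_of_injective hinj).mpr hw)
    (fun x hx => by
      obtain ⟨y, -, rfl⟩ := List.mem_map.mp ((Walk.support_map ..) ▸ hx)
      exact y.2) (by rwa [Walk.length_map])
  rw [Walk.support_map, List.mem_map] at ha hb
  obtain ⟨a, ha, rfl⟩ := ha
  obtain ⟨b, hb, rfl⟩ := hb
  refine ⟨a, b, ha, hb, hab, fun hmem => hnot ?_⟩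
  rw [Walk.edges_map]
  exact List.mem_map_of_mem hmem

end SimpleGraph

lemma switchSign_mk_eq_false_iff {V : Type*} (sign : Sym2 V → Bool) (W : Set V) (u v : V) :
    switchSign sign W s(u, v) = false ↔ (sign s(u, v) = true ↔ ¬(u ∈ W ↔ v ∈ W)) := by
  have hcross : (∃ a b : V, s(u, v) = s(a, b) ∧ a ∈ W ∧ b ∉ W) ↔ ¬(u ∈ W ↔ v ∈ W) := by
    constructor
    · rintro ⟨a, b, hab, ha, hb⟩
      rcases Sym2.eq_iff.mp hab with ⟨rfl, rfl⟩ | ⟨rfl, rfl⟩ <;> tauto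
    · intro h
      by_cases hu : u ∈ W
      · exact ⟨u, v, rfl, hu, by tauto⟩
      · exact ⟨v, u, Sym2.eq_swap, by tauto, hu⟩
  unfold switchSign
  split_ifs with h <;> cases sign s(u, v) <;> simp_all

lemma even_countP_of_not_positiveTriangle {V : Type*} {G : SimpleGraph V}
    {sign : Sym2 V → Bool} {a b c : V} (hab : G.Adj a b) (hbc : G.Adj b c) (hca : G.Adj c a)
    (h : ¬ PositiveTriangle G sign a b c) : Even ([s(a, b), s(b, c), s(c, a)].countP sign) := by
  have hodd := fun heven => h ⟨hab, hbc, hca, heven⟩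
  simp only [List.countP_cons, List.countP_nil] at hodd ⊢
  revert hodd
  cases sign s(a, b) <;> cases sign s(b, c) <;> cases sign s(c, a) <;> decide

theorem stmt4_general {V : Type*} (G : SimpleGraph V) (sign : Sym2 V → Bool)
    (X : Set V)
    (hchordal : ∀ (u : V) (w : G.Walk u u), w.IsCycle → (∀ x ∈ w.support, x ∈ X) →
      4 ≤ w.length →
      ∃ a b : V, a ∈ w.support ∧ b ∈ w.support ∧ G.Adj a b ∧ s(a, b) ∉ w.edges)
    (htri : ¬ ∃ a b c : V, a ∈ X ∧ b ∈ X ∧ c ∈ X ∧ PositiveTriangle G sign a b c) :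
    ∃ W ⊆ X, ∀ u v : V, u ∈ X → v ∈ X → G.Adj u v →
      switchSign sign W s(u, v) = false := by
  obtain ⟨A, hA⟩ : IsBalanced (G.induce X) (fun e => !sign (e.map Subtype.val)) := by
    refine SimpleGraph.isBalanced_of_forall_loop_even _ fun u c => ?_
    simp only [Bool.not_not]
    refine (SimpleGraph.isChordal_induce hchordal).even_countP_edges _
      (fun a b c hab hbc hca => ?_) c
    exact even_countP_of_not_positiveTriangle hab hbc hca fun hpos =>
      htri ⟨a, b, c, a.2, b.2, c.2, hpos⟩
  refine ⟨Subtype.val '' A, by simp, fun u v hu hv huv => ?_⟩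
  have huvA := hA ⟨u, hu⟩ ⟨v, hv⟩ huv
  rw [switchSign_mk_eq_false_iff]
  simp only [Bool.not_eq_eq_eq_not, Bool.not_true, Sym2.map_mk] at huvA
  simp only [Set.mem_image, Subtype.exists, exists_and_right, exists_eq_right, hu, hv,
    exists_true_left, ← huvA]
  cases sign s(u, v) <;> simp

/-- If `X ⊆ V(G)` induces a chordal signed subgraph with no positive
triangle, then there is `W ⊆ X` such that in the `W`-switch `G_W` every edge with both
endpoints in `X` is negative. -/
theorem stmt4 {V : Type*} [Fintype V] (G : SimpleGraph V) (sign : Sym2 V → Bool)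
    (X : Set V)
    (hchordal : ∀ (u : V) (w : G.Walk u u), w.IsCycle → (∀ x ∈ w.support, x ∈ X) →
      4 ≤ w.length →
      ∃ a b : V, a ∈ w.support ∧ b ∈ w.support ∧ G.Adj a b ∧ s(a, b) ∉ w.edges)
    (htri : ¬ ∃ a b c : V, a ∈ X ∧ b ∈ X ∧ c ∈ X ∧ PositiveTriangle G sign a b c) :
    ∃ W ⊆ X, ∀ u v : V, u ∈ X → v ∈ X → G.Adj u v →
      switchSign sign W s(u, v) = false :=
  stmt4_general G sign X hchordal htri
end

section
/- Let G=(V,E) be a connected signed graph and let V = U ∪ W with U ∩ W = ∅, U ≠ ∅ and W ≠ ∅. Then β(G) ≥ β(G[U]) + β(G[W]) + |E(U,W)|/2, where E(U,W) is the set of edges with one endpoint in U and one in W. Moreover, if G[U] has c1 connected components, G[W] has c2 connected components, β(G[U]) ≥ pt(G[U]) + k1/4 and β(G[W]) ≥ pt(G[W]) + k2/4 for rationals k1, k2, then β(G) ≥ pt(G) + (k1 + k2 − (c1 + c2 − 1))/4. -/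
-- auxiliary lemmas

lemma signConsistent_iff {V : Type*} (sign : Sym2 V → Bool) (A : Set V) (u v : V) :
    SignConsistent sign A s(u, v) ↔ (sign s(u, v) = true ↔ (u ∈ A ↔ v ∈ A)) := by
  constructor
  · exact fun h => h u v rfl
  · intro h x y hxy
    rw [Sym2.eq_iff] at hxy
    rcases hxy with ⟨rfl, rfl⟩ | ⟨rfl, rfl⟩
    · exact h
    · rw [h]; tauto

lemma consistent_transfer {V : Type*} (sign : Sym2 V → Bool) (U : Set V) (A0 : Set ↥U)
    (B : Set V) (hB : ∀ a : ↥U, ((a : V) ∈ B ↔ a ∈ A0)) (e : Sym2 ↥U) :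
    SignConsistent (fun e => sign (Sym2.map Subtype.val e)) A0 e
      ↔ SignConsistent sign B (Sym2.map Subtype.val e) := by
  induction e using Sym2.ind with
  | _ x y =>
    rw [Sym2.map_pair_eq, signConsistent_iff, signConsistent_iff]
    simp only [Sym2.map_pair_eq]
    rw [hB x, hB y]

lemma image_filter_edges {V : Type*} (G : SimpleGraph V) (U : Set V)
    (p : Sym2 V → Prop) (q : Sym2 ↥U → Prop)
    (hq : ∀ e : Sym2 ↥U, q e ↔ p (Sym2.map Subtype.val e)) :
    Sym2.map (Subtype.val : ↥U → V) '' {e | e ∈ (G.induce U).edgeSet ∧ q e}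
      = {e | (e ∈ G.edgeSet ∧ ∀ x ∈ e, x ∈ U) ∧ p e} := by
  ext e
  constructor
  · rintro ⟨e', ⟨he', hq'⟩, rfl⟩
    rw [hq e'] at hq'
    induction e' using Sym2.ind with
    | _ x y =>
      rw [Sym2.map_pair_eq] at hq' ⊢
      refine ⟨⟨?_, ?_⟩, hq'⟩
      · rw [SimpleGraph.mem_edgeSet] at he' ⊢
        simpa [SimpleGraph.comap] using he'
      · intro z hz
        rw [Sym2.mem_iff] at hz
        rcases hz with rfl | rfl
        · exact x.2
        · exact y.2
  · rintro ⟨⟨he, hEU⟩, hp⟩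
    induction e using Sym2.ind with
    | _ x y =>
      rw [SimpleGraph.mem_edgeSet] at he
      have hx : x ∈ U := hEU x (Sym2.mem_iff.mpr (Or.inl rfl))
      have hy : y ∈ U := hEU y (Sym2.mem_iff.mpr (Or.inr rfl))
      refine ⟨s(⟨x, hx⟩, ⟨y, hy⟩), ⟨?_, ?_⟩, by rw [Sym2.map_pair_eq]⟩
      · rw [SimpleGraph.mem_edgeSet]
        simpa [SimpleGraph.comap] using he
      · rw [hq, Sym2.map_pair_eq]
        exact hp

lemma edge_partition {V : Type*} (G : SimpleGraph V) (U W : Set V)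
    (huniv : U ∪ W = Set.univ) (p : Sym2 V → Prop) :
    {e | e ∈ G.edgeSet ∧ p e} =
      {e | (e ∈ G.edgeSet ∧ ∀ x ∈ e, x ∈ U) ∧ p e} ∪
      {e | (e ∈ G.edgeSet ∧ ∀ x ∈ e, x ∈ W) ∧ p e} ∪
      {e | (e ∈ G.edgeSet ∧ ∃ a ∈ U, ∃ b ∈ W, e = s(a, b)) ∧ p e} := by
  have hmem : ∀ v : V, v ∈ U ∨ v ∈ W := by
    intro v
    have : v ∈ U ∪ W := huniv ▸ Set.mem_univ v
    exact this
  ext e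
  induction e using Sym2.ind with
  | _ x y =>
    simp only [Set.mem_setOf_eq, Set.mem_union]
    constructor
    · rintro ⟨he, hp⟩
      rcases hmem x with hx | hx <;> rcases hmem y with hy | hy
      · refine Or.inl (Or.inl ⟨⟨he, ?_⟩, hp⟩)
        intro z hz; rw [Sym2.mem_iff] at hz; rcases hz with rfl | rfl <;> assumption
      · exact Or.inr ⟨⟨he, x, hx, y, hy, rfl⟩, hp⟩
      · exact Or.inr ⟨⟨he, y, hy, x, hx, Sym2.eq_swap⟩, hp⟩
      · refine Or.inl (Or.inr ⟨⟨he, ?_⟩, hp⟩)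
        intro z hz; rw [Sym2.mem_iff] at hz; rcases hz with rfl | rfl <;> assumption
    · rintro ((⟨⟨he, _⟩, hp⟩ | ⟨⟨he, _⟩, hp⟩) | ⟨⟨he, _⟩, hp⟩) <;> exact ⟨he, hp⟩

lemma ncard_edge_split {V : Type*} [Finite V] (G : SimpleGraph V) (U W : Set V)
    (hdisj : Disjoint U W) (huniv : U ∪ W = Set.univ) (p : Sym2 V → Prop) :
    {e | e ∈ G.edgeSet ∧ p e}.ncard =
      {e | (e ∈ G.edgeSet ∧ ∀ x ∈ e, x ∈ U) ∧ p e}.ncard +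
      {e | (e ∈ G.edgeSet ∧ ∀ x ∈ e, x ∈ W) ∧ p e}.ncard +
      {e | (e ∈ G.edgeSet ∧ ∃ a ∈ U, ∃ b ∈ W, e = s(a, b)) ∧ p e}.ncard := by
  have d1 : Disjoint {e | (e ∈ G.edgeSet ∧ ∀ x ∈ e, x ∈ U) ∧ p e}
      {e | (e ∈ G.edgeSet ∧ ∀ x ∈ e, x ∈ W) ∧ p e} := by
    rw [Set.disjoint_left]
    rintro e ⟨⟨he, hU⟩, -⟩ ⟨⟨-, hW⟩, -⟩
    induction e using Sym2.ind with
    | _ x y =>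
      have hx := Sym2.mem_iff.mpr (Or.inl rfl : x = x ∨ x = y)
      exact (Set.disjoint_left.mp hdisj (hU x hx) (hW x hx))
  have d2 : Disjoint ({e | (e ∈ G.edgeSet ∧ ∀ x ∈ e, x ∈ U) ∧ p e} ∪
      {e | (e ∈ G.edgeSet ∧ ∀ x ∈ e, x ∈ W) ∧ p e})
      {e | (e ∈ G.edgeSet ∧ ∃ a ∈ U, ∃ b ∈ W, e = s(a, b)) ∧ p e} := by
    rw [Set.disjoint_left]
    rintro e (⟨⟨he, hU⟩, -⟩ | ⟨⟨he, hW⟩, -⟩) ⟨⟨-, a, ha, b, hb, rfl⟩, -⟩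
    · have hbU : b ∈ U := hU b (Sym2.mem_iff.mpr (Or.inr rfl))
      exact Set.disjoint_left.mp hdisj hbU hb
    · have haW : a ∈ W := hW a (Sym2.mem_iff.mpr (Or.inl rfl))
      exact Set.disjoint_left.mp hdisj ha haW
  rw [edge_partition G U W huniv p, Set.ncard_union_eq d2 (Set.toFinite _) (Set.toFinite _),
    Set.ncard_union_eq d1 (Set.toFinite _) (Set.toFinite _)]

lemma cross_flip {V : Type*} (sign : Sym2 V → Bool) (A A' : Set V) (U W : Set V)
    (hAA' : ∀ a ∈ U, (a ∈ A ↔ a ∈ A')) (hflip : ∀ b ∈ W, (b ∈ A ↔ b ∉ A'))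
    {e : Sym2 V} (he : ∃ p ∈ U, ∃ q ∈ W, e = s(p, q)) :
    SignConsistent sign A e ↔ ¬ SignConsistent sign A' e := by
  obtain ⟨p, hp, q, hq, rfl⟩ := he
  rw [signConsistent_iff, signConsistent_iff]
  have h1 := hAA' p hp
  have h2 := hflip q hq
  cases hs : sign s(p, q) <;> simp [hs] <;> tauto

lemma bdd_balCounts {V : Type*} [Finite V] (G : SimpleGraph V) (sign : Sym2 V → Bool) :
    BddAbove {n | ∃ A : Set V, n = balCount G sign A} := by
  refine ⟨(Set.univ : Set (Sym2 V)).ncard, ?_⟩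
  rintro n ⟨B, rfl⟩
  exact Set.ncard_le_ncard (Set.subset_univ _) (Set.toFinite _)

lemma balCount_le_beta {V : Type*} [Finite V] (G : SimpleGraph V) (sign : Sym2 V → Bool)
    (A : Set V) : balCount G sign A ≤ beta G sign :=
  le_csSup (bdd_balCounts G sign) ⟨A, rfl⟩

lemma beta_eq_balCount {V : Type*} [Finite V] (G : SimpleGraph V) (sign : Sym2 V → Bool) :
    ∃ A, beta G sign = balCount G sign A :=
  Nat.sSup_mem (s := {n | ∃ A : Set V, n = balCount G sign A})
    ⟨balCount G sign ∅, ∅, rfl⟩ (bdd_balCounts G sign)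

lemma balCount_compl {V : Type*} (G : SimpleGraph V) (sign : Sym2 V → Bool) (A : Set V) :
    balCount G sign Aᶜ = balCount G sign A := by
  unfold balCount
  congr 1
  ext e
  induction e using Sym2.ind with
  | _ x y =>
    simp only [Set.mem_setOf_eq, signConsistent_iff, Set.mem_compl_iff]
    constructor <;> (rintro ⟨he, h⟩; exact ⟨he, by rw [h]; tauto⟩)

lemma card_cc_one {V : Type*} (G : SimpleGraph V) (h : G.Connected) :
    Nat.card G.ConnectedComponent = 1 := by
  have h1 : Subsingleton G.ConnectedComponent := by
    constructor
    intro a b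
    refine SimpleGraph.ConnectedComponent.ind₂ (fun u v => ?_) a b
    exact SimpleGraph.ConnectedComponent.sound (h.preconnected u v)
  have h2 : Nonempty G.ConnectedComponent := Nonempty.map G.connectedComponentMk h.nonempty
  exact Nat.card_eq_one_iff_unique.mpr ⟨h1, h2⟩


/-- Let `G` be connected and `V = U ∪ W` a partition into nonempty
parts. Then `β(G) ≥ β(G[U]) + β(G[W]) + |E(U,W)|/2`; moreover, if `G[U]` has `c1`
components, `G[W]` has `c2` components, `β(G[U]) ≥ pt(G[U]) + k1/4` and
`β(G[W]) ≥ pt(G[W]) + k2/4`, then `β(G) ≥ pt(G) + (k1 + k2 − (c1 + c2 − 1))/4`. -/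
theorem stmt6 {V : Type*} [Fintype V] (G : SimpleGraph V) (sign : Sym2 V → Bool)
    (hconn : G.Connected) (U W : Set V) (hdisj : Disjoint U W)
    (huniv : U ∪ W = Set.univ) (hU : U.Nonempty) (hW : W.Nonempty)
    (c1 c2 : ℕ) (k1 k2 : ℚ)
    (hc1 : c1 = Nat.card (G.induce U).ConnectedComponent)
    (hc2 : c2 = Nat.card (G.induce W).ConnectedComponent) :
    (beta G sign : ℚ) ≥ (betaOn G sign U : ℚ) + (betaOn G sign W : ℚ) +
        ({e | e ∈ G.edgeSet ∧ ∃ p ∈ U, ∃ q ∈ W, e = s(p, q)}.ncard : ℚ) / 2 ∧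
      ((betaOn G sign U : ℚ) ≥ ptOn G U + k1 / 4 →
        (betaOn G sign W : ℚ) ≥ ptOn G W + k2 / 4 →
        (beta G sign : ℚ) ≥ pt G + (k1 + k2 - ((c1 : ℚ) + (c2 : ℚ) - 1)) / 4) := by
  classical
  obtain ⟨AU0, hAU0⟩ := beta_eq_balCount (G.induce U) (fun e => sign (Sym2.map Subtype.val e))
  obtain ⟨AW0, hAW0⟩ := beta_eq_balCount (G.induce W) (fun e => sign (Sym2.map Subtype.val e))
  set AU : Set V := Subtype.val '' AU0 with hAUdef
  set AW : Set V := Subtype.val '' AW0 with hAWdef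
  set A : Set V := AU ∪ AW with hAdef
  set A' : Set V := AU ∪ (W \ AW) with hA'def
  have hAUU : AU ⊆ U := by rintro _ ⟨a, -, rfl⟩; exact a.2
  have hAWW : AW ⊆ W := by rintro _ ⟨a, -, rfl⟩; exact a.2
  have hA_U : ∀ a ∈ U, (a ∈ A ↔ a ∈ AU) := by
    intro a ha
    constructor
    · rintro (h | h)
      · exact h
      · exact absurd (hAWW h) (fun hw => Set.disjoint_left.mp hdisj ha hw)
    · exact Or.inl
  have hA'_U : ∀ a ∈ U, (a ∈ A' ↔ a ∈ AU) := by
    intro a ha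
    constructor
    · rintro (h | ⟨hw, -⟩)
      · exact h
      · exact absurd hw (fun hw => Set.disjoint_left.mp hdisj ha hw)
    · exact Or.inl
  have hA_W : ∀ b ∈ W, (b ∈ A ↔ b ∈ AW) := by
    intro b hb
    constructor
    · rintro (h | h)
      · exact absurd (hAUU h) (fun hu => Set.disjoint_left.mp hdisj hu hb)
      · exact h
    · exact Or.inr
  have hA'_W : ∀ b ∈ W, (b ∈ A' ↔ b ∉ AW) := by
    intro b hb
    constructor
    · rintro (h | ⟨-, h⟩)
      · exact absurd (hAUU h) (fun hu => Set.disjoint_left.mp hdisj hu hb)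
      · exact h
    · exact fun h => Or.inr ⟨hb, h⟩
  have hAA' : ∀ a ∈ U, (a ∈ A ↔ a ∈ A') := fun a ha => (hA_U a ha).trans (hA'_U a ha).symm
  have hflip : ∀ b ∈ W, (b ∈ A ↔ b ∉ A') := by
    intro b hb
    rw [hA_W b hb, hA'_W b hb]
    tauto
  -- count transfer on U side
  have hinj : Function.Injective (Sym2.map (Subtype.val : ↥U → V)) :=
    Sym2.map.injective Subtype.val_injective
  have hinjW : Function.Injective (Sym2.map (Subtype.val : ↥W → V)) :=
    Sym2.map.injective Subtype.val_injective
  have hUcount : ∀ B : Set V, (∀ a ∈ U, (a ∈ B ↔ a ∈ AU)) →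
      {e | (e ∈ G.edgeSet ∧ ∀ x ∈ e, x ∈ U) ∧ SignConsistent sign B e}.ncard
        = betaOn G sign U := by
    intro B hB
    have hB' : ∀ a : ↥U, ((a : V) ∈ B ↔ a ∈ AU0) := by
      intro a
      rw [hB a a.2, hAUdef]
      exact Subtype.val_injective.mem_set_image
    rw [← image_filter_edges G U (SignConsistent sign B)
        (SignConsistent (fun e => sign (Sym2.map Subtype.val e)) AU0)
        (fun e => consistent_transfer sign U AU0 B hB' e),
      Set.ncard_image_of_injective _ hinj]
    exact hAU0.symm
  have hWcount : ∀ (B : Set V) (A0 : Set ↥W), (∀ b : ↥W, ((b : V) ∈ B ↔ b ∈ A0)) →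
      {e | (e ∈ G.edgeSet ∧ ∀ x ∈ e, x ∈ W) ∧ SignConsistent sign B e}.ncard
        = balCount (G.induce W) (fun e => sign (Sym2.map Subtype.val e)) A0 := by
    intro B A0 hB'
    rw [← image_filter_edges G W (SignConsistent sign B)
        (SignConsistent (fun e => sign (Sym2.map Subtype.val e)) A0)
        (fun e => consistent_transfer sign W A0 B hB' e),
      Set.ncard_image_of_injective _ hinjW]
    rfl
  -- the two balanced counts
  have hbalA : balCount G sign A = betaOn G sign U + betaOn G sign W +
      {e | (e ∈ G.edgeSet ∧ ∃ a ∈ U, ∃ b ∈ W, e = s(a, b)) ∧ SignConsistent sign A e}.ncard := by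
    rw [balCount, ncard_edge_split G U W hdisj huniv (SignConsistent sign A),
      hUcount A hA_U, hWcount A AW0 ?_]
    · rw [← hAW0]; rfl
    · intro b
      rw [hA_W b b.2, hAWdef]
      exact Subtype.val_injective.mem_set_image
  have hbalA' : balCount G sign A' = betaOn G sign U + betaOn G sign W +
      {e | (e ∈ G.edgeSet ∧ ∃ a ∈ U, ∃ b ∈ W, e = s(a, b)) ∧ SignConsistent sign A' e}.ncard := by
    rw [balCount, ncard_edge_split G U W hdisj huniv (SignConsistent sign A'),
      hUcount A' hA'_U, hWcount A' AW0ᶜ ?_]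
    · rw [balCount_compl, ← hAW0]; rfl
    · intro b
      rw [hA'_W b b.2, Set.mem_compl_iff]
      constructor
      · intro h hb0
        exact h (hAWdef ▸ Set.mem_image_of_mem _ hb0)
      · intro h hb
        exact h (Subtype.val_injective.mem_set_image.mp (hAWdef ▸ hb))
  -- cross count
  have hcross :
      {e | (e ∈ G.edgeSet ∧ ∃ a ∈ U, ∃ b ∈ W, e = s(a, b)) ∧ SignConsistent sign A e}.ncard +
      {e | (e ∈ G.edgeSet ∧ ∃ a ∈ U, ∃ b ∈ W, e = s(a, b)) ∧ SignConsistent sign A' e}.ncard =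
      {e | e ∈ G.edgeSet ∧ ∃ p ∈ U, ∃ q ∈ W, e = s(p, q)}.ncard := by
    have hu : {e | (e ∈ G.edgeSet ∧ ∃ a ∈ U, ∃ b ∈ W, e = s(a, b)) ∧ SignConsistent sign A e} ∪
        {e | (e ∈ G.edgeSet ∧ ∃ a ∈ U, ∃ b ∈ W, e = s(a, b)) ∧ SignConsistent sign A' e} =
        {e | e ∈ G.edgeSet ∧ ∃ p ∈ U, ∃ q ∈ W, e = s(p, q)} := by
      ext e
      simp only [Set.mem_union, Set.mem_setOf_eq]
      constructor
      · rintro (⟨h, -⟩ | ⟨h, -⟩) <;> exact h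
      · intro h
        by_cases hc : SignConsistent sign A e
        · exact Or.inl ⟨h, hc⟩
        · refine Or.inr ⟨h, ?_⟩
          have := cross_flip sign A A' U W hAA' hflip h.2
          exact not_not.mp (fun h' => hc (this.mpr h'))
    have hd : Disjoint
        {e | (e ∈ G.edgeSet ∧ ∃ a ∈ U, ∃ b ∈ W, e = s(a, b)) ∧ SignConsistent sign A e}
        {e | (e ∈ G.edgeSet ∧ ∃ a ∈ U, ∃ b ∈ W, e = s(a, b)) ∧ SignConsistent sign A' e} := by
      rw [Set.disjoint_left]
      rintro e ⟨he, hc⟩ ⟨-, hc'⟩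
      exact (cross_flip sign A A' U W hAA' hflip he.2).mp hc hc'
    rw [← Set.ncard_union_eq hd (Set.toFinite _) (Set.toFinite _), hu]
  -- part 1
  have hle1 := balCount_le_beta G sign A
  have hle2 := balCount_le_beta G sign A'
  have part1 : (beta G sign : ℚ) ≥ (betaOn G sign U : ℚ) + (betaOn G sign W : ℚ) +
      ({e | e ∈ G.edgeSet ∧ ∃ p ∈ U, ∃ q ∈ W, e = s(p, q)}.ncard : ℚ) / 2 := by
    rw [hbalA] at hle1
    rw [hbalA'] at hle2
    have h2 : 2 * beta G sign ≥ 2 * betaOn G sign U + 2 * betaOn G sign W +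
        {e | e ∈ G.edgeSet ∧ ∃ p ∈ U, ∃ q ∈ W, e = s(p, q)}.ncard := by omega
    have := (Nat.cast_le (α := ℚ)).mpr h2
    push_cast at this
    linarith
  refine ⟨part1, fun h1 h2 => ?_⟩
  -- part 2
  -- edge counts
  have hEU : {e | (e ∈ G.edgeSet ∧ ∀ x ∈ e, x ∈ U) ∧ True}.ncard
      = (G.induce U).edgeSet.ncard := by
    rw [← image_filter_edges G U (fun _ => True) (fun _ => True) (by simp),
      Set.ncard_image_of_injective _ hinj]
    congr 1
    ext e
    simp
  have hEW : {e | (e ∈ G.edgeSet ∧ ∀ x ∈ e, x ∈ W) ∧ True}.ncard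
      = (G.induce W).edgeSet.ncard := by
    rw [← image_filter_edges G W (fun _ => True) (fun _ => True) (by simp),
      Set.ncard_image_of_injective _ hinjW]
    congr 1
    ext e
    simp
  have hedges : G.edgeSet.ncard = (G.induce U).edgeSet.ncard + (G.induce W).edgeSet.ncard +
      {e | e ∈ G.edgeSet ∧ ∃ p ∈ U, ∃ q ∈ W, e = s(p, q)}.ncard := by
    have h := ncard_edge_split G U W hdisj huniv (fun _ => True)
    rw [hEU, hEW] at h
    simp only [and_true, Set.setOf_mem_eq] at h
    exact h
  -- vertex count
  have hn : Nat.card V = Nat.card ↥U + Nat.card ↥W := by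
    rw [Nat.card_coe_set_eq, Nat.card_coe_set_eq,
      ← Set.ncard_union_eq hdisj (Set.toFinite _) (Set.toFinite _), huniv, Set.ncard_univ]
  have hccG := card_cc_one G hconn
  simp only [ptOn, pt] at h1 h2 ⊢
  rw [← hc1] at h1
  rw [← hc2] at h2
  rw [hccG]
  have hedgesQ : (G.edgeSet.ncard : ℚ) = ((G.induce U).edgeSet.ncard : ℚ)
      + ((G.induce W).edgeSet.ncard : ℚ)
      + ({e | e ∈ G.edgeSet ∧ ∃ p ∈ U, ∃ q ∈ W, e = s(p, q)}.ncard : ℚ) := by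
    exact_mod_cast congrArg (Nat.cast : ℕ → ℚ) hedges
  have hnQ : (Nat.card V : ℚ) = (Nat.card ↥U : ℚ) + (Nat.card ↥W : ℚ) := by
    exact_mod_cast congrArg (Nat.cast : ℕ → ℚ) hn
  push_cast at h1 h2 ⊢
  linarith [part1]
end

section
/- For any connected simple graph Q with at least two vertices, at least one of the following properties holds: (A) there exist v ∈ V(Q) and X ⊆ V(Q) such that Q[X] is a connected component of Q−v and Q[X] is a clique; (B) there exist distinct vertices a, b, c ∈ V(Q) such that the induced subgraph Q[{a,b,c}] is isomorphic to the path P3 (exactly the two edges ab and bc) and Q−{a,b,c} is connected; (C) there exist nonadjacent vertices v, b ∈ V(Q) such that Q−{v,b} is disconnected and for all connected components Q[X] of Q−{v,b}, except possibly one, both Q[X∪{v}] and Q[X∪{b}] are cliques. -/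
/-!
Mark a vertex `x` and prove the statement for every connected vertex set `U` with at least two
vertices, relative to `x`: the clique component of (A) misses `x`, the path of (B) and the pair
of (C) avoid `x`, and the exceptional component in (C) is the one containing `x`.

If `U` has a cut vertex `c₀`, apply induction to `c₀` together with a component of `U - c₀`
not containing `x`, now marked at `c₀`; each outcome lifts back to `U`. If `U` is 2-connected
and neither (A) (which holds when `U - x` is a clique) nor (B) holds, choose an induced path
`a b c` in `U - x` that leaves as few vertices as possible of `U - {a, b, c}` outside the
component `Z` of `x`. Each bad configuration yields an induced path cutting off fewer vertices
from `x`, so: every other component of `U - {a, b, c}` is a clique, one missing `b` is complete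
to `a` and to `c`, and if `Z` touches `c` then at most one component touches `b`, each vertex of
which is adjacent to `a`, `b` and `c`. These facts make `{a, c}` the separating pair of (C).
-/

theorem Set.triple_comm {α : Type*} (a b c : α) : ({c, b, a} : Set α) = {a, b, c} := by
  ext
  simp only [Set.mem_insert_iff, Set.mem_singleton_iff]
  tauto

theorem Set.ncard_sdiff_lt_of_subset {α : Type*} [Finite α] {s t u : Set α} {a : α}
    (hst : s ⊆ t) (has : a ∈ s) (hau : a ∈ u) : (s \ u).ncard < t.ncard :=
  Set.ncard_lt_ncard ⟨fun _ hv => hst hv.1, fun h => (h (hst has)).2 hau⟩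

namespace SimpleGraph

variable {V : Type*} {G : SimpleGraph V} {S S' T U X Y : Set V}
  {u v w x y z a b c d e p q α β γ c₀ : V}

/-- Reachability through vertices of `S`; it is reflexive even outside `S`. -/
def ReachIn (G : SimpleGraph V) (S : Set V) : V → V → Prop :=
  Relation.ReflTransGen fun p q => p ∈ S ∧ q ∈ S ∧ G.Adj p q

def ConnectedOn (G : SimpleGraph V) (S : Set V) : Prop :=
  S.Nonempty ∧ ∀ u ∈ S, ∀ v ∈ S, G.ReachIn S u v

def IsClosedIn (G : SimpleGraph V) (S X : Set V) : Prop :=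
  ∀ u ∈ X, ∀ v ∈ S, G.Adj u v → v ∈ X

def compIn (G : SimpleGraph V) (S : Set V) (y : V) : Set V :=
  {z | z ∈ S ∧ G.ReachIn S y z}

structure IsComponentIn (G : SimpleGraph V) (S X : Set V) : Prop where
  subset : X ⊆ S
  connectedOn : G.ConnectedOn X
  isClosedIn : G.IsClosedIn S X

namespace ReachIn

theorem mono (h : S ⊆ S') (hr : G.ReachIn S u v) : G.ReachIn S' u v :=
  Relation.ReflTransGen.mono (fun _ _ hpq => ⟨h hpq.1, h hpq.2.1, hpq.2.2⟩) _ _ hr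

theorem symm (hr : G.ReachIn S u v) : G.ReachIn S v u := by
  induction hr with
  | refl => exact .refl
  | tail _ h ih => exact .head ⟨h.2.1, h.1, h.2.2.symm⟩ ih

theorem trans (huv : G.ReachIn S u v) (hvw : G.ReachIn S v w) : G.ReachIn S u w :=
  Relation.ReflTransGen.trans huv hvw

theorem of_adj (hu : u ∈ S) (hv : v ∈ S) (h : G.Adj u v) : G.ReachIn S u v :=
  .single ⟨hu, hv, h⟩

theorem mem_of_isClosedIn (hX : G.IsClosedIn S X) (hu : u ∈ X) (hr : G.ReachIn S u v) :
    v ∈ X := by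
  induction hr with
  | refl => exact hu
  | tail _ h ih => exact hX _ ih _ h.2.1 h.2.2

end ReachIn

theorem ConnectedOn.subset_of_isClosedIn (hS : G.ConnectedOn S) (hX : G.IsClosedIn S X)
    (huX : u ∈ X) (huS : u ∈ S) : S ⊆ X :=
  fun _ hv => (hS.2 u huS _ hv).mem_of_isClosedIn hX huX

theorem connectedOn_singleton : G.ConnectedOn {y} :=
  ⟨⟨y, rfl⟩, by rintro u rfl v rfl; exact .refl⟩

theorem ConnectedOn.union (hS : G.ConnectedOn S) (hS' : G.ConnectedOn S') (hu : u ∈ S)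
    (hv : v ∈ S') (huv : G.ReachIn (S ∪ S') u v) : G.ConnectedOn (S ∪ S') := by
  have hl : ∀ p ∈ S, G.ReachIn (S ∪ S') p u := fun p hp =>
    (hS.2 p hp u hu).mono Set.subset_union_left
  have hr : ∀ p ∈ S', G.ReachIn (S ∪ S') p u := fun p hp =>
    ((hS'.2 p hp v hv).mono Set.subset_union_right).trans huv.symm
  have hall : ∀ p ∈ S ∪ S', G.ReachIn (S ∪ S') p u := by
    rintro p (hp | hp)
    exacts [hl p hp, hr p hp]
  exact ⟨⟨u, Or.inl hu⟩, fun p hp q hq => (hall p hp).trans (hall q hq).symm⟩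

theorem ConnectedOn.insert (hS : G.ConnectedOn S) (hu : u ∈ S) (hadj : G.Adj u v) :
    G.ConnectedOn (insert v S) := by
  rw [Set.insert_eq, Set.union_comm]
  exact hS.union connectedOn_singleton hu rfl (.of_adj (Or.inl hu) (Or.inr rfl) hadj)

theorem mem_compIn_self (hy : y ∈ S) : y ∈ G.compIn S y :=
  ⟨hy, .refl⟩

theorem compIn_subset : G.compIn S y ⊆ S :=
  fun _ hz => hz.1

theorem reachIn_compIn (hz : z ∈ G.compIn S y) : G.ReachIn (G.compIn S y) y z := by
  obtain ⟨-, hr⟩ := hz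
  induction hr with
  | refl => exact .refl
  | @tail p q hyp hpq ih =>
    exact ih.tail ⟨⟨hpq.1, hyp⟩, ⟨hpq.2.1, hyp.tail hpq⟩, hpq.2.2⟩

theorem connectedOn_compIn (hy : y ∈ S) : G.ConnectedOn (G.compIn S y) :=
  ⟨⟨y, mem_compIn_self hy⟩, fun _ hp _ hq =>
    (reachIn_compIn hp).symm.trans (reachIn_compIn hq)⟩

theorem isClosedIn_compIn : G.IsClosedIn S (G.compIn S y) :=
  fun _ hz _ hw h => ⟨hw, hz.2.tail ⟨hz.1, hw, h⟩⟩

theorem isComponentIn_compIn (hy : y ∈ S) : G.IsComponentIn S (G.compIn S y) :=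
  ⟨compIn_subset, connectedOn_compIn hy, isClosedIn_compIn⟩

theorem IsComponentIn.eq_compIn (hX : G.IsComponentIn S X) (hy : y ∈ X) :
    X = G.compIn S y :=
  Set.Subset.antisymm (fun _ hz => ⟨hX.subset hz, (hX.connectedOn.2 y hy _ hz).mono hX.subset⟩)
    (fun _ hz => hz.2.mem_of_isClosedIn hX.isClosedIn hy)

theorem mem_of_mem_compIn (hz : z ∈ G.compIn S y) : y ∈ S :=
  hz.2.symm.mem_of_isClosedIn (fun _ _ _ hv _ => hv) hz.1

theorem compIn_eq_of_mem (hz : z ∈ G.compIn S y) : G.compIn S z = G.compIn S y :=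
  ((isComponentIn_compIn (mem_of_mem_compIn hz)).eq_compIn hz).symm

theorem compIn_subset_compIn (hsub : G.compIn S y ⊆ S') :
    G.compIn S y ⊆ G.compIn S' y :=
  fun _ hz => ⟨hsub hz, (reachIn_compIn hz).mono hsub⟩

theorem compIn_subset_compIn_of_adj {t d : V} (hsub : G.compIn S v ⊆ S')
    (hd : d ∈ G.compIn S v) (ht : t ∈ G.compIn S' y) (hadj : G.Adj t d) :
    G.compIn S v ⊆ G.compIn S' y := by
  have hd' : d ∈ G.compIn S' y := isClosedIn_compIn t ht d (hsub hd) hadj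
  rw [← compIn_eq_of_mem hd] at hsub ⊢
  exact fun z hz => ⟨hsub hz, hd'.2.trans ((reachIn_compIn hz).mono hsub)⟩

structure IsP3In (G : SimpleGraph V) (S : Set V) (a b c : V) : Prop where
  left_mem : a ∈ S
  center_mem : b ∈ S
  right_mem : c ∈ S
  adj_left : G.Adj a b
  adj_right : G.Adj b c
  not_adj : ¬ G.Adj a c
  ne : a ≠ c

theorem IsP3In.mono (h : G.IsP3In S a b c) (hS : S ⊆ S') : G.IsP3In S' a b c :=
  ⟨hS h.left_mem, hS h.center_mem, hS h.right_mem, h.adj_left, h.adj_right, h.not_adj, h.ne⟩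

theorem IsP3In.symm (h : G.IsP3In S a b c) : G.IsP3In S c b a :=
  ⟨h.right_mem, h.center_mem, h.left_mem, h.adj_right.symm, h.adj_left.symm,
    fun h' => h.not_adj h'.symm, h.ne.symm⟩

/-- Otherwise the closed neighbourhood of a vertex would be closed in `S`. -/
theorem ConnectedOn.exists_isP3In (hS : G.ConnectedOn S) (hnc : ¬ G.IsClique S) :
    ∃ a b c, G.IsP3In S a b c := by
  obtain ⟨u, hu, w, hw, huw, hnadj⟩ : ∃ u ∈ S, ∃ w ∈ S, u ≠ w ∧ ¬ G.Adj u w := by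
    simpa [IsClique, Set.Pairwise] using hnc
  by_contra! hno
  have hclosed : G.IsClosedIn S {v | v ∈ S ∧ (v = u ∨ G.Adj u v)} := by
    rintro v ⟨hv, rfl | huv⟩ v' hv' hvv'
    · exact ⟨hv', Or.inr hvv'⟩
    · refine ⟨hv', ?_⟩
      by_contra! h
      exact hno u v v' ⟨hu, hv, hv', huv, hvv', h.2, h.1.symm⟩
  rcases (hS.subset_of_isClosedIn hclosed ⟨hu, Or.inl rfl⟩ hu hw).2 with h | h
  exacts [huw h.symm, hnadj h]

theorem IsComponentIn.exists_adj_of_connectedOn_diff {t : V} (hY : G.IsComponentIn (U \ T) Y)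
    (ht : t ∈ T) (hU : G.ConnectedOn (U \ {t})) (hp : p ∈ U \ {t}) (hpY : p ∉ Y) :
    ∃ d ∈ Y, ∃ t' ∈ T, t' ≠ t ∧ G.Adj d t' := by
  by_contra! hno
  obtain ⟨y, hy⟩ := hY.connectedOn.1
  have hyU := hY.subset hy
  refine hpY (hU.subset_of_isClosedIn ?_ hy ⟨hyU.1, fun hyt => hyU.2 (hyt ▸ ht)⟩ hp)
  intro w hw v hv hwv
  by_cases hvT : v ∈ T
  · exact absurd hwv (hno w hw v hvT hv.2)
  · exact hY.isClosedIn w hw v ⟨hv.1, hvT⟩ hwv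

theorem compIn_diff_subset (hT : Disjoint (G.compIn (U \ T) y) S) :
    G.compIn (U \ T) y ⊆ G.compIn (U \ S) y :=
  compIn_subset_compIn fun _ hz => ⟨(compIn_subset hz).1, Set.disjoint_left.1 hT hz⟩

def farPart (G : SimpleGraph V) (U T : Set V) (x : V) : Set V :=
  (U \ T) \ G.compIn (U \ T) x

theorem compIn_subset_farPart (hw : w ∈ G.farPart U T x) :
    G.compIn (U \ T) w ⊆ G.farPart U T x := fun _ hz =>
  ⟨hz.1, fun hzx => hw.2 ((compIn_eq_of_mem hzx).symm.trans (compIn_eq_of_mem hz) ▸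
    mem_compIn_self hw.1)⟩

theorem isClosedIn_diff_pair (hY : G.IsClosedIn (U \ {a, b, c}) Y)
    (hnb : ∀ d ∈ Y, ¬ G.Adj d b) : G.IsClosedIn (U \ {a, c}) Y := by
  refine fun d hd v hv hdv => hY d hd v ⟨hv.1, ?_⟩ hdv
  rintro (rfl | rfl | rfl)
  · exact hv.2 (by simp)
  · exact hnb d hd hdv
  · exact hv.2 (by simp)

theorem diff_subset_diff_pair : U \ {a, b, c} ⊆ U \ {a, c} :=
  Set.sdiff_subset_sdiff_right (by simp [Set.insert_subset_iff])

theorem IsComponentIn.eq_compIn_of_forall_not_adj (hX : G.IsComponentIn (U \ {a, c}) X)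
    (hu : u ∈ X) (hu' : u ∈ U \ {a, b, c})
    (hnb : ∀ d ∈ G.compIn (U \ {a, b, c}) u, ¬ G.Adj d b) :
    X = G.compIn (U \ {a, b, c}) u := by
  have hD : G.IsComponentIn (U \ {a, c}) (G.compIn (U \ {a, b, c}) u) :=
    ⟨compIn_subset.trans diff_subset_diff_pair, connectedOn_compIn hu',
      isClosedIn_diff_pair isClosedIn_compIn hnb⟩
  exact (hX.eq_compIn hu).trans (hD.eq_compIn (mem_compIn_self hu')).symm

theorem IsComponentIn.compIn_subset_of_mem (hX : G.IsComponentIn (U \ {a, c}) X) (hu : u ∈ X) :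
    G.compIn (U \ {a, b, c}) u ⊆ X := fun _ hd =>
  ((reachIn_compIn hd).mono (compIn_subset.trans diff_subset_diff_pair)).mem_of_isClosedIn
    hX.isClosedIn hu

def HasCliqueLeaf (G : SimpleGraph V) (U : Set V) (x : V) : Prop :=
  ∃ u ∈ U, ∃ X, G.IsComponentIn (U \ {u}) X ∧ G.IsClique X ∧ x ∉ X

def HasRemovableP3 (G : SimpleGraph V) (U : Set V) (x : V) : Prop :=
  ∃ a b c, G.IsP3In (U \ {x}) a b c ∧ G.ConnectedOn (U \ {a, b, c})

def HasCliqueCut (G : SimpleGraph V) (U : Set V) (x : V) : Prop :=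
  ∃ p ∈ U \ {x}, ∃ q ∈ U \ {x}, p ≠ q ∧ ¬ G.Adj p q ∧ ¬ G.ConnectedOn (U \ {p, q}) ∧
    ∀ X, G.IsComponentIn (U \ {p, q}) X → x ∉ X →
      G.IsClique (insert p X) ∧ G.IsClique (insert q X)

structure MinimalP3 (G : SimpleGraph V) (U : Set V) (x a b c : V) : Prop where
  mem : x ∈ U
  connectedOn_diff : ∀ u ∈ U, G.ConnectedOn (U \ {u})
  not_connectedOn : ∀ α β γ, G.IsP3In (U \ {x}) α β γ →
    ¬ G.ConnectedOn (U \ {α, β, γ})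
  isP3In : G.IsP3In (U \ {x}) a b c
  minimal : ∀ α β γ, G.IsP3In (U \ {x}) α β γ →
    (G.farPart U {a, b, c} x).ncard ≤ (G.farPart U {α, β, γ} x).ncard

namespace MinimalP3

theorem symm (h : G.MinimalP3 U x a b c) : G.MinimalP3 U x c b a :=
  { h with
    isP3In := h.isP3In.symm
    minimal := by rw [Set.triple_comm a b c]; exact h.minimal }

theorem triple_subset (h : G.MinimalP3 U x a b c) : ({a, b, c} : Set V) ⊆ U := by
  simp only [Set.insert_subset_iff, Set.singleton_subset_iff]
  exact ⟨h.isP3In.left_mem.1, h.isP3In.center_mem.1, h.isP3In.right_mem.1⟩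

theorem x_mem_diff (h : G.MinimalP3 U x a b c) : x ∈ U \ {a, b, c} := by
  refine ⟨h.mem, ?_⟩
  rintro (hx | hx | hx)
  · exact h.isP3In.left_mem.2 hx.symm
  · exact h.isP3In.center_mem.2 hx.symm
  · exact h.isP3In.right_mem.2 hx.symm

theorem x_mem_compIn (h : G.MinimalP3 U x a b c) : x ∈ G.compIn (U \ {a, b, c}) x :=
  mem_compIn_self h.x_mem_diff

theorem farPart_subset (h : G.MinimalP3 U x a b c) : G.farPart U {a, b, c} x ⊆ U \ {x} :=
  fun _ hw => ⟨hw.1.1, fun hwx => hw.2 (hwx ▸ h.x_mem_compIn)⟩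

theorem farPart_nonempty (h : G.MinimalP3 U x a b c) : (G.farPart U {a, b, c} x).Nonempty := by
  by_contra! hW
  rw [farPart, Set.sdiff_eq_empty] at hW
  exact h.not_connectedOn a b c h.isP3In
    ⟨⟨x, h.x_mem_diff⟩, fun u hu v hv => (hW hu).2.symm.trans (hW hv).2⟩

theorem exists_adj_compIn_x (h : G.MinimalP3 U x a b c) {t : V} (ht : t ∈ ({a, b, c} : Set V)) :
    ∃ z ∈ G.compIn (U \ {a, b, c}) x, ∃ t' ∈ ({a, b, c} : Set V),
      t' ≠ t ∧ G.Adj z t' := by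
  obtain ⟨w, hw⟩ := h.farPart_nonempty
  exact (isComponentIn_compIn h.x_mem_diff).exists_adj_of_connectedOn_diff ht
    (h.connectedOn_diff t (h.triple_subset ht)) ⟨hw.1.1, fun hwt => hw.1.2 (hwt ▸ ht)⟩ hw.2

theorem exists_adj_compIn (h : G.MinimalP3 U x a b c) (hw : w ∈ G.farPart U {a, b, c} x)
    {t : V} (ht : t ∈ ({a, b, c} : Set V)) :
    ∃ d ∈ G.compIn (U \ {a, b, c}) w, ∃ t' ∈ ({a, b, c} : Set V), t' ≠ t ∧ G.Adj d t' :=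
  (isComponentIn_compIn hw.1).exists_adj_of_connectedOn_diff ht
    (h.connectedOn_diff t (h.triple_subset ht)) ⟨h.mem, fun hxt => h.x_mem_diff.2 (hxt ▸ ht)⟩
    fun hx => (compIn_subset_farPart hw hx).2 h.x_mem_compIn

theorem false_of_farPart_subset [Finite V] (h : G.MinimalP3 U x a b c)
    (hP : G.IsP3In (U \ {x}) α β γ) {F : Set V} (hsub : G.farPart U {α, β, γ} x ⊆ F)
    (hF : F.ncard < (G.farPart U {a, b, c} x).ncard) : False :=
  (h.minimal α β γ hP).not_gt (lt_of_le_of_lt (Set.ncard_le_ncard hsub) hF)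

theorem b_c_mem_compIn (h : G.MinimalP3 U x a b c)
    (hZ : G.compIn (U \ {a, b, c}) x ⊆ G.compIn (U \ T) x) (hb : b ∈ U \ T)
    (hc : c ∈ U \ T) : b ∈ G.compIn (U \ T) x ∧ c ∈ G.compIn (U \ T) x := by
  obtain ⟨z, hz, t, ht, hta, hzt⟩ := h.exists_adj_compIn_x (t := a) (by simp)
  simp only [Set.mem_insert_iff, Set.mem_singleton_iff] at ht
  rcases ht with rfl | rfl | rfl
  · exact absurd rfl hta
  · have htK := isClosedIn_compIn z (hZ hz) t hb hzt
    exact ⟨htK, isClosedIn_compIn t htK c hc h.isP3In.adj_right⟩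
  · have htK := isClosedIn_compIn z (hZ hz) t hc hzt
    exact ⟨isClosedIn_compIn t htK b hb h.isP3In.adj_right.symm, htK⟩

theorem compIn_subset_of_b_c_mem (h : G.MinimalP3 U x a b c)
    (hv : v ∈ G.farPart U {a, b, c} x) (hvT : G.compIn (U \ {a, b, c}) v ⊆ U \ T)
    (hb : b ∈ G.compIn (U \ T) x) (hc : c ∈ G.compIn (U \ T) x) :
    G.compIn (U \ {a, b, c}) v ⊆ G.compIn (U \ T) x := by
  obtain ⟨e, he, t, ht, hta, het⟩ := h.exists_adj_compIn hv (t := a) (by simp)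
  have htK : t ∈ G.compIn (U \ T) x := by
    simp only [Set.mem_insert_iff, Set.mem_singleton_iff] at ht
    rcases ht with rfl | rfl | rfl
    exacts [absurd rfl hta, hb, hc]
  exact compIn_subset_compIn_of_adj hvT he htK het.symm

theorem farPart_subset_of_subset_insert (h : G.MinimalP3 U x a b c)
    (hw : w ∈ G.farPart U {a, b, c} x) (hT : T ⊆ insert a (G.compIn (U \ {a, b, c}) w)) :
    G.farPart U T x ⊆ G.compIn (U \ {a, b, c}) w \ T := by
  have hP := h.isP3In
  have hnT : ∀ t ∈ ({a, b, c} : Set V), t ≠ a → t ∈ U \ T := fun t ht hta =>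
    ⟨h.triple_subset ht, fun htT => (hT htT).elim hta fun htD => (compIn_subset htD).2 ht⟩
  have hZ : G.compIn (U \ {a, b, c}) x ⊆ G.compIn (U \ T) x := by
    refine compIn_diff_subset (Set.disjoint_left.2 fun y hy hyT => ?_)
    rcases hT hyT with rfl | hyD
    · exact (compIn_subset hy).2 (by simp)
    · exact (compIn_subset_farPart hw hyD).2 hy
  obtain ⟨hbK, hcK⟩ :=
    h.b_c_mem_compIn hZ (hnT b (by simp) hP.adj_left.ne') (hnT c (by simp) hP.ne.symm)
  rintro v ⟨hv, hvK⟩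
  refine ⟨?_, hv.2⟩
  by_contra hvD
  have hvW : v ∈ G.farPart U {a, b, c} x := by
    refine ⟨⟨hv.1, ?_⟩, fun hvZ => hvK (hZ hvZ)⟩
    rintro (rfl | rfl | rfl)
    · exact hvK (isClosedIn_compIn b hbK v hv hP.adj_left.symm)
    · exact hvK hbK
    · exact hvK hcK
  refine hvK (h.compIn_subset_of_b_c_mem hvW (fun y hy => ⟨(compIn_subset hy).1, fun hyT => ?_⟩)
    hbK hcK (mem_compIn_self hvW.1))
  rcases hT hyT with rfl | hyD
  · exact (compIn_subset hy).2 (by simp)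
  · exact hvD (((compIn_eq_of_mem hy).symm.trans (compIn_eq_of_mem hyD)).le
      (mem_compIn_self hvW.1))

theorem isClique_compIn [Finite V] (h : G.MinimalP3 U x a b c)
    (hw : w ∈ G.farPart U {a, b, c} x) : G.IsClique (G.compIn (U \ {a, b, c}) w) := by
  by_contra hnc
  have hDW := compIn_subset_farPart hw
  obtain ⟨α, β, γ, hP⟩ := (connectedOn_compIn hw.1).exists_isP3In hnc
  have hTD : ({α, β, γ} : Set V) ⊆ G.compIn (U \ {a, b, c}) w := by
    simp only [Set.insert_subset_iff, Set.singleton_subset_iff]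
    exact ⟨hP.left_mem, hP.center_mem, hP.right_mem⟩
  exact h.false_of_farPart_subset (hP.mono (hDW.trans h.farPart_subset))
    (h.farPart_subset_of_subset_insert hw (hTD.trans (Set.subset_insert _ _)))
    (Set.ncard_sdiff_lt_of_subset hDW hP.left_mem (by simp))

theorem adj_a_of_forall_not_adj_b [Finite V] (h : G.MinimalP3 U x a b c)
    (hw : w ∈ G.farPart U {a, b, c} x)
    (hnb : ∀ d ∈ G.compIn (U \ {a, b, c}) w, ¬ G.Adj d b)
    (hd : d ∈ G.compIn (U \ {a, b, c}) w) : G.Adj d a := by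
  by_contra hda
  have hDW := compIn_subset_farPart hw
  obtain ⟨e, he, t, ht, htc, het⟩ := h.exists_adj_compIn hw (t := c) (by simp)
  have hea : G.Adj e a := by
    simp only [Set.mem_insert_iff, Set.mem_singleton_iff] at ht
    rcases ht with rfl | rfl | rfl
    exacts [het, absurd het (hnb e he), absurd rfl htc]
  have hed : e ≠ d := fun hed => hda (hed ▸ hea)
  have hP : G.IsP3In (U \ {x}) a e d :=
    ⟨h.isP3In.left_mem, h.farPart_subset (hDW he), h.farPart_subset (hDW hd), hea.symm,
      h.isClique_compIn hw he hd hed, fun had => hda had.symm,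
      fun had => (compIn_subset hd).2 (by simp [had])⟩
  have hT : ({a, e, d} : Set V) ⊆ insert a (G.compIn (U \ {a, b, c}) w) := by
    simp [Set.insert_subset_iff, he, hd]
  exact h.false_of_farPart_subset hP (h.farPart_subset_of_subset_insert hw hT)
    (Set.ncard_sdiff_lt_of_subset hDW he (by simp))

theorem adj_c_of_forall_not_adj_b [Finite V] (h : G.MinimalP3 U x a b c)
    (hw : w ∈ G.farPart U {a, b, c} x)
    (hnb : ∀ d ∈ G.compIn (U \ {a, b, c}) w, ¬ G.Adj d b)
    (hd : d ∈ G.compIn (U \ {a, b, c}) w) : G.Adj d c := by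
  rw [← Set.triple_comm a b c] at hw hnb hd
  exact h.symm.adj_a_of_forall_not_adj_b hw hnb hd

/-- `c` stays joined to `x` through the component of `x`, and then so does `b`. -/
theorem farPart_subset_of_adj_c (h : G.MinimalP3 U x a b c)
    (hcZ : ∃ z ∈ G.compIn (U \ {a, b, c}) x, G.Adj z c)
    (hT : T ⊆ insert a (insert b (G.farPart U {a, b, c} x))) :
    G.farPart U T x ⊆ insert a (G.farPart U {a, b, c} x) \ T := by
  obtain ⟨z, hz, hzc⟩ := hcZ
  have hP := h.isP3In
  set K := G.compIn (U \ T) x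
  have hZ : G.compIn (U \ {a, b, c}) x ⊆ K := by
    refine compIn_diff_subset (Set.disjoint_left.2 fun y hy hyT => ?_)
    rcases hT hyT with rfl | rfl | hyW
    · exact (compIn_subset hy).2 (by simp)
    · exact (compIn_subset hy).2 (by simp)
    · exact hyW.2 hy
  have hcT : c ∉ T := fun hcT => by
    rcases hT hcT with hca | hcb | hcW
    exacts [hP.ne hca.symm, hP.adj_right.ne hcb.symm, hcW.1.2 (by simp)]
  have hcK : c ∈ K := isClosedIn_compIn z (hZ hz) c ⟨hP.right_mem.1, hcT⟩ hzc
  rintro v ⟨hv, hvK⟩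
  refine ⟨?_, hv.2⟩
  by_cases hva : v = a
  · exact Or.inl hva
  refine Or.inr ⟨⟨hv.1, ?_⟩, fun hvZ => hvK (hZ hvZ)⟩
  rintro (rfl | rfl | rfl)
  · exact hva rfl
  · exact hvK (isClosedIn_compIn c hcK v hv hP.adj_right.symm)
  · exact hvK hcK

theorem adj_a_of_adj_b [Finite V] (h : G.MinimalP3 U x a b c)
    (hcZ : ∃ z ∈ G.compIn (U \ {a, b, c}) x, G.Adj z c)
    (hd : d ∈ G.farPart U {a, b, c} x) (hbd : G.Adj b d) : G.Adj a d := by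
  by_contra had
  have hP : G.IsP3In (U \ {x}) a b d :=
    ⟨h.isP3In.left_mem, h.isP3In.center_mem, h.farPart_subset hd, h.isP3In.adj_left, hbd, had,
      fun had => hd.1.2 (by simp [had])⟩
  have hT : ({a, b, d} : Set V) ⊆ insert a (insert b (G.farPart U {a, b, c} x)) := by
    simp [Set.insert_subset_iff, hd]
  refine h.false_of_farPart_subset hP ((h.farPart_subset_of_adj_c hcZ hT).trans ?_)
    (Set.ncard_sdiff_lt_of_subset subset_rfl hd (Set.mem_singleton d))
  rintro v ⟨rfl | hv, hvT⟩
  · exact absurd (by simp) hvT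
  · exact ⟨hv, fun hvd => hvT (by simp [hvd])⟩

theorem false_of_isP3In_of_adj_c [Finite V] (h : G.MinimalP3 U x a b c)
    (hcZ : ∃ z ∈ G.compIn (U \ {a, b, c}) x, G.Adj z c) (hP : G.IsP3In (U \ {x}) α β γ)
    (hT : ({α, β, γ} : Set V) = {p, q, b}) (hp : p ∈ G.farPart U {a, b, c} x)
    (hq : q ∈ G.farPart U {a, b, c} x) (hpq : p ≠ q) : False := by
  set W := G.farPart U {a, b, c} x
  have hpqW : ({p, q} : Set V) ⊆ W := by
    simp only [Set.insert_subset_iff, Set.singleton_subset_iff]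
    exact ⟨hp, hq⟩
  have hT' : ({α, β, γ} : Set V) ⊆ insert a (insert b W) := by
    rw [hT]
    simp [Set.insert_subset_iff, hp, hq]
  refine h.false_of_farPart_subset hP ((h.farPart_subset_of_adj_c hcZ hT').trans ?_)
    (F := insert a (W \ {p, q})) ?_
  · rw [hT]
    rintro v ⟨rfl | hv, hvT⟩
    · exact Set.mem_insert v _
    · exact Or.inr ⟨hv, fun hvpq => hvT (by rcases hvpq with rfl | rfl <;> simp)⟩
  · change (insert a (W \ {p, q})).ncard < W.ncard
    have h2 : 2 ≤ W.ncard := Set.ncard_pair hpq ▸ Set.ncard_le_ncard hpqW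
    have := Set.ncard_insert_le a (W \ {p, q})
    rw [Set.ncard_sdiff hpqW, Set.ncard_pair hpq] at this
    omega

theorem adj_b_of_mem_compIn [Finite V] (h : G.MinimalP3 U x a b c)
    (hcZ : ∃ z ∈ G.compIn (U \ {a, b, c}) x, G.Adj z c) (hw : w ∈ G.farPart U {a, b, c} x)
    (he : e ∈ G.compIn (U \ {a, b, c}) w) (heb : G.Adj e b)
    (hd : d ∈ G.compIn (U \ {a, b, c}) w) : G.Adj d b := by
  by_contra hdb
  have hDW := compIn_subset_farPart hw
  have hde : d ≠ e := fun hde => hdb (hde ▸ heb)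
  exact h.false_of_isP3In_of_adj_c hcZ
    ⟨h.farPart_subset (hDW hd), h.farPart_subset (hDW he), h.isP3In.center_mem,
      h.isClique_compIn hw hd he hde, heb, hdb, fun hdb' => (hDW hd).1.2 (by simp [hdb'])⟩
    rfl (hDW hd) (hDW he) hde

theorem mem_compIn_of_adj_b [Finite V] (h : G.MinimalP3 U x a b c)
    (hcZ : ∃ z ∈ G.compIn (U \ {a, b, c}) x, G.Adj z c)
    (hd : d ∈ G.farPart U {a, b, c} x) (he : e ∈ G.farPart U {a, b, c} x)
    (hbd : G.Adj b d) (hbe : G.Adj b e) : e ∈ G.compIn (U \ {a, b, c}) d := by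
  by_contra hed
  have hne : d ≠ e := fun hde => hed (hde ▸ mem_compIn_self hd.1)
  have hnadj : ¬ G.Adj d e := fun hde =>
    hed (isClosedIn_compIn d (mem_compIn_self hd.1) e he.1 hde)
  exact h.false_of_isP3In_of_adj_c hcZ
    ⟨h.farPart_subset hd, h.isP3In.center_mem, h.farPart_subset he, hbd.symm, hbe, hnadj, hne⟩
    (by rw [Set.pair_comm]) hd he hne

theorem false_of_adj_a_c [Finite V] (h : G.MinimalP3 U x a b c)
    (hbZ : ∃ z ∈ G.compIn (U \ {a, b, c}) x, G.Adj z b) (hd : d ∈ G.farPart U {a, b, c} x)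
    (had : G.Adj a d) (hcd : G.Adj c d)
    (hWb : ∀ w ∈ G.farPart U {a, b, c} x, w ≠ d → G.Adj b w) : False := by
  obtain ⟨z, hz, hzb⟩ := hbZ
  have hP := h.isP3In
  set K := G.compIn (U \ {a, d, c}) x
  have hZ : G.compIn (U \ {a, b, c}) x ⊆ K := by
    refine compIn_diff_subset (Set.disjoint_left.2 fun y hy hyT => ?_)
    rcases hyT with rfl | rfl | rfl
    · exact (compIn_subset hy).2 (by simp)
    · exact hd.2 hy
    · exact (compIn_subset hy).2 (by simp)
  have hbK : b ∈ K := by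
    refine isClosedIn_compIn z (hZ hz) b ⟨hP.center_mem.1, ?_⟩ hzb
    rintro (hba | hbd | hbc)
    exacts [hP.adj_left.ne' hba, hd.1.2 (by simp [← hbd]), hP.adj_right.ne hbc]
  refine h.false_of_farPart_subset ⟨hP.left_mem, h.farPart_subset hd, hP.right_mem, had,
    hcd.symm, hP.not_adj, hP.ne⟩ (F := ∅) ?_
    (by rw [Set.ncard_empty]; exact (Set.ncard_pos).2 h.farPart_nonempty)
  rintro v ⟨hv, hvK⟩
  apply hvK
  by_cases hvb : v = b
  · exact hvb ▸ hbK
  by_cases hvZ : v ∈ G.compIn (U \ {a, b, c}) x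
  · exact hZ hvZ
  have hvW : v ∈ G.farPart U {a, b, c} x := ⟨⟨hv.1, by simp_all⟩, hvZ⟩
  exact isClosedIn_compIn b hbK v hv (hWb v hvW (by rintro rfl; simp at hv))

theorem false_of_forall_exists_adj_b [Finite V] (h : G.MinimalP3 U x a b c)
    (hbZ : ∃ z ∈ G.compIn (U \ {a, b, c}) x, G.Adj z b)
    (hcZ : ∃ z ∈ G.compIn (U \ {a, b, c}) x, G.Adj z c)
    (hall : ∀ w ∈ G.farPart U {a, b, c} x, ∃ e ∈ G.compIn (U \ {a, b, c}) w, G.Adj e b) :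
    False := by
  set W := G.farPart U {a, b, c} x
  have hP := h.isP3In
  have hWb : ∀ w ∈ W, G.Adj b w := fun w hw => by
    obtain ⟨e, he, heb⟩ := hall w hw
    exact (h.adj_b_of_mem_compIn hcZ hw he heb (mem_compIn_self hw.1)).symm
  have hWa : ∀ w ∈ W, G.Adj a w := fun w hw => h.adj_a_of_adj_b hcZ hw (hWb w hw)
  have hWc : ∀ w ∈ W, ¬ G.Adj c w := fun w hw hcw =>
    h.false_of_adj_a_c hbZ hw (hWa w hw) hcw fun v hv _ => hWb v hv
  obtain ⟨w, hw⟩ := h.farPart_nonempty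
  by_cases haZ : ∃ z ∈ G.compIn (U \ {a, b, c}) x, G.Adj z a
  · rw [← Set.triple_comm a b c] at haZ
    exact hWc w hw (h.symm.adj_a_of_adj_b haZ (by rwa [Set.triple_comm]) (hWb w hw))
  push Not at haZ
  -- now `insert a W` is closed in `U - b` and misses `x`, so `b` would be a cut vertex
  have hclosed : G.IsClosedIn (U \ {b}) (insert a W) := by
    rintro u hu v hv huv
    by_cases hva : v = a
    · exact hva ▸ Set.mem_insert a W
    have hvc : v ≠ c := by
      rintro rfl
      rcases hu with rfl | hu
      exacts [hP.not_adj huv, hWc u hu huv.symm]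
    have hvb : v ≠ b := hv.2
    refine Or.inr ⟨⟨hv.1, by simp [hva, hvb, hvc]⟩, fun hvZ => ?_⟩
    rcases hu with rfl | hu
    · exact haZ v hvZ huv.symm
    · exact hu.2 (isClosedIn_compIn v hvZ u hu.1 huv.symm)
  have hx := (h.connectedOn_diff b hP.center_mem.1).subset_of_isClosedIn hclosed
    (Set.mem_insert a W) ⟨hP.left_mem.1, hP.adj_left.ne⟩
    ⟨h.mem, fun hxb => hP.center_mem.2 hxb.symm⟩
  rcases hx with hxa | hxW
  exacts [hP.left_mem.2 hxa.symm, hxW.2 h.x_mem_compIn]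

theorem exists_forall_not_adj_b [Finite V] (h : G.MinimalP3 U x a b c)
    (hbZ : ∃ z ∈ G.compIn (U \ {a, b, c}) x, G.Adj z b) :
    ∃ w ∈ G.farPart U {a, b, c} x, ∀ d ∈ G.compIn (U \ {a, b, c}) w, ¬ G.Adj d b := by
  by_contra! hall
  obtain ⟨z, hz, t, ht, htb, hzt⟩ := h.exists_adj_compIn_x (t := b) (by simp)
  simp only [Set.mem_insert_iff, Set.mem_singleton_iff] at ht
  rcases ht with rfl | rfl | rfl
  · rw [← Set.triple_comm t b c] at hbZ hz hall
    exact h.symm.false_of_forall_exists_adj_b hbZ ⟨z, hz, hzt⟩ hall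
  · exact htb rfl
  · exact h.false_of_forall_exists_adj_b hbZ ⟨z, hz, hzt⟩ hall

theorem exists_adj_a_and_c_of_forall_not_adj_b (h : G.MinimalP3 U x a b c)
    (hbZ : ∀ z ∈ G.compIn (U \ {a, b, c}) x, ¬ G.Adj z b) :
    (∃ z ∈ G.compIn (U \ {a, b, c}) x, G.Adj z a) ∧
      ∃ z ∈ G.compIn (U \ {a, b, c}) x, G.Adj z c := by
  obtain ⟨z, hz, t, ht, htc, hzt⟩ := h.exists_adj_compIn_x (t := c) (by simp)
  obtain ⟨z', hz', t', ht', ht'a, hzt'⟩ := h.exists_adj_compIn_x (t := a) (by simp)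
  simp only [Set.mem_insert_iff, Set.mem_singleton_iff] at ht ht'
  constructor
  · rcases ht with rfl | rfl | rfl
    exacts [⟨z, hz, hzt⟩, absurd hzt (hbZ z hz), absurd rfl htc]
  · rcases ht' with rfl | rfl | rfl
    exacts [absurd rfl ht'a, absurd hzt' (hbZ z' hz'), ⟨z', hz', hzt'⟩]

theorem b_mem_diff_pair (h : G.MinimalP3 U x a b c) : b ∈ U \ {a, c} :=
  ⟨h.isP3In.center_mem.1, by simp [h.isP3In.adj_left.ne', h.isP3In.adj_right.ne]⟩

theorem mem_farPart_of_isComponentIn (h : G.MinimalP3 U x a b c)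
    (hX : G.IsComponentIn (U \ {a, c}) X) (hxX : x ∉ X) (hu : u ∈ X) (hub : u ≠ b) :
    u ∈ G.farPart U {a, b, c} x := by
  have hu' := hX.subset hu
  refine ⟨⟨hu'.1, ?_⟩, fun huZ => hxX (hX.compIn_subset_of_mem (b := b) hu ?_)⟩
  · simp only [Set.mem_sdiff, Set.mem_insert_iff, Set.mem_singleton_iff, not_or] at hu' ⊢
    exact ⟨hu'.2.1, hub, hu'.2.2⟩
  · exact compIn_eq_of_mem huZ ▸ h.x_mem_compIn

theorem isClique_insert_of_forall_not_adj_b [Finite V] (h : G.MinimalP3 U x a b c)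
    (hw : w ∈ G.farPart U {a, b, c} x)
    (hnb : ∀ d ∈ G.compIn (U \ {a, b, c}) w, ¬ G.Adj d b) :
    G.IsClique (insert a (G.compIn (U \ {a, b, c}) w)) ∧
      G.IsClique (insert c (G.compIn (U \ {a, b, c}) w)) :=
  ⟨isClique_insert.2 ⟨h.isClique_compIn hw, fun _ hd _ =>
      (h.adj_a_of_forall_not_adj_b hw hnb hd).symm⟩,
    isClique_insert.2 ⟨h.isClique_compIn hw, fun _ hd _ =>
      (h.adj_c_of_forall_not_adj_b hw hnb hd).symm⟩⟩

theorem isClique_insert_of_b_notMem [Finite V] (h : G.MinimalP3 U x a b c)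
    (hX : G.IsComponentIn (U \ {a, c}) X) (hxX : x ∉ X) (hbX : b ∉ X) :
    G.IsClique (insert a X) ∧ G.IsClique (insert c X) := by
  obtain ⟨u, hu⟩ := hX.connectedOn.1
  have huW := h.mem_farPart_of_isComponentIn hX hxX hu fun hub => hbX (hub ▸ hu)
  have hnb : ∀ d ∈ G.compIn (U \ {a, b, c}) u, ¬ G.Adj d b := fun d hd hdb =>
    hbX (hX.isClosedIn d (hX.compIn_subset_of_mem hu hd) b h.b_mem_diff_pair hdb)
  rw [hX.eq_compIn_of_forall_not_adj hu huW.1 hnb]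
  exact h.isClique_insert_of_forall_not_adj_b huW hnb

theorem isClique_insert_of_b_mem [Finite V] (h : G.MinimalP3 U x a b c)
    (haZ : ∃ z ∈ G.compIn (U \ {a, b, c}) x, G.Adj z a)
    (hcZ : ∃ z ∈ G.compIn (U \ {a, b, c}) x, G.Adj z c)
    (hX : G.IsComponentIn (U \ {a, c}) X) (hxX : x ∉ X) (hbX : b ∈ X) :
    G.IsClique (insert a X) ∧ G.IsClique (insert c X) := by
  rw [← Set.triple_comm a b c] at haZ
  have hadj : ∀ u ∈ X, u ≠ b → u ∈ G.farPart U {a, b, c} x ∧ G.Adj b u ∧ G.Adj a u ∧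
      G.Adj c u := by
    intro u hu hub
    have huW := h.mem_farPart_of_isComponentIn hX hxX hu hub
    obtain ⟨e, he, heb⟩ : ∃ e ∈ G.compIn (U \ {a, b, c}) u, G.Adj e b := by
      by_contra! hnb
      rw [hX.eq_compIn_of_forall_not_adj hu huW.1 hnb] at hbX
      exact (compIn_subset hbX).2 (by simp)
    have hbu := (h.adj_b_of_mem_compIn hcZ huW he heb (mem_compIn_self huW.1)).symm
    exact ⟨huW, hbu, h.adj_a_of_adj_b hcZ huW hbu,
      h.symm.adj_a_of_adj_b haZ (by rwa [Set.triple_comm]) hbu⟩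
  have hXc : G.IsClique X := by
    intro u hu v hv huv
    by_cases hub : u = b
    · exact hub ▸ (hadj v hv (hub ▸ huv).symm).2.1
    by_cases hvb : v = b
    · exact hvb ▸ (hadj u hu hub).2.1.symm
    obtain ⟨huW, hbu, -⟩ := hadj u hu hub
    obtain ⟨hvW, hbv, -⟩ := hadj v hv hvb
    exact h.isClique_compIn huW (mem_compIn_self huW.1)
      (h.mem_compIn_of_adj_b hcZ huW hvW hbu hbv) huv
  refine ⟨isClique_insert.2 ⟨hXc, fun u hu _ => ?_⟩,
    isClique_insert.2 ⟨hXc, fun u hu _ => ?_⟩⟩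
  · by_cases hub : u = b
    · exact hub ▸ h.isP3In.adj_left
    · exact (hadj u hu hub).2.2.1
  · by_cases hub : u = b
    · exact hub ▸ h.isP3In.adj_right.symm
    · exact (hadj u hu hub).2.2.2

theorem hasCliqueCut [Finite V] (h : G.MinimalP3 U x a b c) : G.HasCliqueCut U x := by
  have hP := h.isP3In
  set Z := G.compIn (U \ {a, b, c}) x
  have hZ : Z ⊆ U \ {a, c} := compIn_subset.trans diff_subset_diff_pair
  have hbac := h.b_mem_diff_pair
  refine ⟨a, hP.left_mem, c, hP.right_mem, hP.ne, hP.not_adj, ?_⟩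
  by_cases hbZ : ∃ z ∈ Z, G.Adj z b
  · obtain ⟨w, hw, hnb⟩ := h.exists_forall_not_adj_b hbZ
    obtain ⟨z, hz, hzb⟩ := hbZ
    have hbK : b ∈ G.compIn (U \ {a, c}) x :=
      isClosedIn_compIn z (compIn_subset_compIn hZ hz) b hbac hzb
    refine ⟨fun hc => ?_, fun X hX hxX => h.isClique_insert_of_b_notMem hX hxX fun hbX => ?_⟩
    · exact (compIn_subset_farPart hw (hc.subset_of_isClosedIn
        (isClosedIn_diff_pair isClosedIn_compIn hnb) (mem_compIn_self hw.1)
        (diff_subset_diff_pair hw.1) (hZ h.x_mem_compIn))).2 h.x_mem_compIn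
    · exact hxX (hbK.2.symm.mem_of_isClosedIn hX.isClosedIn hbX)
  · push Not at hbZ
    obtain ⟨haZ, hcZ⟩ := h.exists_adj_a_and_c_of_forall_not_adj_b hbZ
    refine ⟨fun hc => ?_, fun X hX hxX => ?_⟩
    · exact (compIn_subset (hc.subset_of_isClosedIn (isClosedIn_diff_pair isClosedIn_compIn hbZ)
        h.x_mem_compIn (hZ h.x_mem_compIn) hbac)).2 (by simp)
    · by_cases hbX : b ∈ X
      · exact h.isClique_insert_of_b_mem haZ hcZ hX hxX hbX
      · exact h.isClique_insert_of_b_notMem hX hxX hbX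

end MinimalP3

theorem outcome_of_connectedOn_diff [Finite V] (hx : x ∈ U)
    (h2 : ∀ u ∈ U, G.ConnectedOn (U \ {u})) :
    G.HasCliqueLeaf U x ∨ G.HasRemovableP3 U x ∨ G.HasCliqueCut U x := by
  by_cases hK : G.IsClique (U \ {x})
  · exact Or.inl ⟨x, hx, U \ {x}, ⟨subset_rfl, h2 x hx, fun _ _ _ hv _ => hv⟩, hK,
      fun hx' => hx'.2 rfl⟩
  by_cases hB : G.HasRemovableP3 U x
  · exact Or.inr (Or.inl hB)
  obtain ⟨p, q, r, hpqr⟩ := (h2 x hx).exists_isP3In hK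
  obtain ⟨⟨a, b, c⟩, hP, hmin⟩ := Set.exists_min_image
    {t : V × V × V | G.IsP3In (U \ {x}) t.1 t.2.1 t.2.2}
    (fun t => (G.farPart U {t.1, t.2.1, t.2.2} x).ncard) (Set.toFinite _) ⟨(p, q, r), hpqr⟩
  exact Or.inr (Or.inr (MinimalP3.hasCliqueCut
    ⟨hx, h2, fun α β γ hP' hc => hB ⟨α, β, γ, hP', hc⟩, hP,
      fun α β γ hP' => hmin (α, β, γ) hP'⟩))

theorem IsComponentIn.mem_insert_of_adj (hY : G.IsComponentIn (U \ {c₀}) Y) (hw : w ∈ Y)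
    (hv : v ∈ U) (hwv : G.Adj w v) : v ∈ insert c₀ Y := by
  by_cases hvc : v = c₀
  · exact Or.inl hvc
  · exact Or.inr (hY.isClosedIn w hw v ⟨hv, hvc⟩ hwv)

theorem IsComponentIn.isClosedIn_of_insert (hY : G.IsComponentIn (U \ {c₀}) Y) (hXY : X ⊆ Y)
    (hX : G.IsClosedIn (insert c₀ Y \ S) X) : G.IsClosedIn (U \ S) X :=
  fun w hw v hv hwv => hX w hw v ⟨hY.mem_insert_of_adj (hXY hw) hv.1 hwv, hv.2⟩ hwv

theorem IsComponentIn.notMem (hY : G.IsComponentIn (U \ {c₀}) Y) : c₀ ∉ Y :=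
  fun h => (hY.subset h).2 rfl

theorem IsComponentIn.insert_subset (hc₀ : c₀ ∈ U) (hY : G.IsComponentIn (U \ {c₀}) Y) :
    insert c₀ Y ⊆ U :=
  Set.insert_subset hc₀ (hY.subset.trans Set.sdiff_subset)

theorem IsComponentIn.connectedOn_insert (hU : G.ConnectedOn U) (hc₀ : c₀ ∈ U)
    (hY : G.IsComponentIn (U \ {c₀}) Y) : G.ConnectedOn (insert c₀ Y) := by
  obtain ⟨y, hy⟩ := hY.connectedOn.1
  obtain ⟨w, hw, hwc⟩ : ∃ w ∈ Y, G.Adj w c₀ := by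
    by_contra! hno
    have hclosed : G.IsClosedIn U Y := fun w hw v hv hwv =>
      (hY.mem_insert_of_adj hw hv hwv).resolve_left fun hvc => hno w hw (hvc ▸ hwv)
    exact hY.notMem (hU.subset_of_isClosedIn hclosed hy (hY.subset hy).1 hc₀)
  exact hY.connectedOn.insert hw hwc

/-- A component of `U - Y` missing `c₀` would have no neighbour outside itself in `U`. -/
theorem IsComponentIn.connectedOn_diff (hU : G.ConnectedOn U) (hc₀ : c₀ ∈ U)
    (hY : G.IsComponentIn (U \ {c₀}) Y) : G.ConnectedOn (U \ Y) := by
  have hc₀Y : c₀ ∈ U \ Y := ⟨hc₀, hY.notMem⟩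
  suffices hall : U \ Y ⊆ G.compIn (U \ Y) c₀ from
    ⟨⟨c₀, hc₀Y⟩, fun u hu v hv => (hall hu).2.symm.trans (hall hv).2⟩
  intro z hz
  by_contra hzK
  obtain ⟨y, hy⟩ := hY.connectedOn.1
  have hclosed : G.IsClosedIn U (G.compIn (U \ Y) z) := by
    intro w hw v hv hwv
    by_cases hvY : v ∈ Y
    · rcases hY.mem_insert_of_adj hvY (compIn_subset hw).1 hwv.symm with rfl | hwY
      · exact absurd ((compIn_eq_of_mem hw).symm ▸ mem_compIn_self hz) hzK
      · exact absurd hwY (compIn_subset hw).2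
    · exact isClosedIn_compIn w hw v ⟨hv, hvY⟩ hwv
  exact (compIn_subset (hU.subset_of_isClosedIn hclosed (mem_compIn_self hz) hz.1
    (hY.subset hy).1)).2 hy

theorem IsComponentIn.hasCliqueLeaf (hc₀ : c₀ ∈ U) (hY : G.IsComponentIn (U \ {c₀}) Y)
    (hxY : x ∉ Y) (hA : G.HasCliqueLeaf (insert c₀ Y) c₀) : G.HasCliqueLeaf U x := by
  obtain ⟨u, hu, X, hX, hXc, hc₀X⟩ := hA
  have hXY : X ⊆ Y := fun v hv =>
    (hX.subset hv).1.resolve_left fun hvc => hc₀X (hvc ▸ hv)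
  have hsub := hY.insert_subset hc₀
  exact ⟨u, hsub hu, X, ⟨fun v hv => ⟨hsub (hX.subset hv).1, (hX.subset hv).2⟩,
    hX.connectedOn, hY.isClosedIn_of_insert hXY hX.isClosedIn⟩, hXc, fun hx => hxY (hXY hx)⟩

theorem IsComponentIn.hasRemovableP3 (hU : G.ConnectedOn U) (hc₀ : c₀ ∈ U)
    (hY : G.IsComponentIn (U \ {c₀}) Y) (hxY : x ∉ Y)
    (hB : G.HasRemovableP3 (insert c₀ Y) c₀) : G.HasRemovableP3 U x := by
  obtain ⟨a, b, c, hP, hc⟩ := hB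
  have hYx : insert c₀ Y \ {c₀} ⊆ U \ {x} := fun v hv =>
    have hvY := hv.1.resolve_left hv.2
    ⟨(hY.subset hvY).1, fun hvx => hxY (hvx ▸ hvY)⟩
  have hTY : ({a, b, c} : Set V) ⊆ Y := by
    simp only [Set.insert_subset_iff, Set.singleton_subset_iff]
    exact ⟨hP.left_mem.1.resolve_left hP.left_mem.2, hP.center_mem.1.resolve_left hP.center_mem.2,
      hP.right_mem.1.resolve_left hP.right_mem.2⟩
  have hsplit : U \ {a, b, c} = (insert c₀ Y \ {a, b, c}) ∪ (U \ Y) := by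
    ext v
    constructor
    · rintro ⟨hv, hvT⟩
      by_cases hvY : v ∈ Y
      exacts [Or.inl ⟨Or.inr hvY, hvT⟩, Or.inr ⟨hv, hvY⟩]
    · rintro (⟨hv, hvT⟩ | ⟨hv, hvY⟩)
      exacts [⟨hY.insert_subset hc₀ hv, hvT⟩, ⟨hv, fun hvT => hvY (hTY hvT)⟩]
  refine ⟨a, b, c, hP.mono hYx, hsplit ▸ hc.union (hY.connectedOn_diff hU hc₀)
    ⟨Set.mem_insert c₀ Y, fun h => hY.notMem (hTY h)⟩ ⟨hc₀, hY.notMem⟩ .refl⟩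

theorem IsComponentIn.hasCliqueCut (hU : G.ConnectedOn U) (hc₀ : c₀ ∈ U)
    (hY : G.IsComponentIn (U \ {c₀}) Y) (hx : x ∈ U) (hxY : x ∉ Y)
    (hC : G.HasCliqueCut (insert c₀ Y) c₀) : G.HasCliqueCut U x := by
  obtain ⟨p, hp, q, hq, hpq, hnadj, hnc, hgood⟩ := hC
  have hpY : p ∈ Y := hp.1.resolve_left hp.2
  have hqY : q ∈ Y := hq.1.resolve_left hq.2
  have hsub := hY.insert_subset hc₀
  have hc₀Y := hY.notMem
  have hUY : U \ Y ⊆ U \ {p, q} := fun v hv => ⟨hv.1, by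
    rintro (rfl | rfl)
    exacts [hv.2 hpY, hv.2 hqY]⟩
  have hxpq : x ∈ U \ {p, q} := hUY ⟨hx, hxY⟩
  refine ⟨p, ⟨(hY.subset hpY).1, fun h => hxY (h ▸ hpY)⟩, q,
    ⟨(hY.subset hqY).1, fun h => hxY (h ▸ hqY)⟩, hpq, hnadj, fun hc => ?_,
    fun X hX hxX => ?_⟩
  · obtain ⟨w, hw, hwc⟩ : ∃ w ∈ insert c₀ Y \ {p, q},
        c₀ ∉ G.compIn (insert c₀ Y \ {p, q}) w := by
      by_contra! hall
      refine hnc ⟨⟨c₀, Set.mem_insert c₀ Y, ?_⟩,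
        fun u hu v hv => (hall u hu).2.trans (hall v hv).2.symm⟩
      rintro (h | h)
      exacts [hc₀Y (h ▸ hpY), hc₀Y (h ▸ hqY)]
    have hX₁Y : G.compIn (insert c₀ Y \ {p, q}) w ⊆ Y := fun v hv =>
      (compIn_subset hv).1.resolve_left fun hvc => hwc (hvc ▸ hv)
    exact hxY (hX₁Y (hc.subset_of_isClosedIn (hY.isClosedIn_of_insert hX₁Y isClosedIn_compIn)
      (mem_compIn_self hw) ⟨hsub hw.1, hw.2⟩ hxpq))
  · have hXY : X ⊆ Y := fun v hv => by
      by_contra hvY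
      have hvx := (hY.connectedOn_diff hU hc₀).2 v ⟨(hX.subset hv).1, hvY⟩ x ⟨hx, hxY⟩
      exact hxX ((hvx.mono hUY).mem_of_isClosedIn hX.isClosedIn hv)
    exact hgood X ⟨fun v hv => ⟨Or.inr (hXY hv), (hX.subset hv).2⟩, hX.connectedOn,
      fun w hw v hv hwv => hX.isClosedIn w hw v ⟨hsub hv.1, hv.2⟩ hwv⟩
      fun hc₀X => hc₀Y (hXY hc₀X)

theorem exists_isComponentIn_notMem (hc₀ : c₀ ∈ U) (h2 : 2 ≤ U.ncard)
    (hnc : ¬ G.ConnectedOn (U \ {c₀})) (x : V) :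
    ∃ Y, G.IsComponentIn (U \ {c₀}) Y ∧ x ∉ Y ∧ ∃ y ∈ U \ {c₀}, y ∉ Y := by
  have hne : (U \ {c₀}).Nonempty :=
    Set.nonempty_of_ncard_ne_zero (by rw [Set.ncard_sdiff_singleton_of_mem hc₀]; omega)
  obtain ⟨u, hu, v, hv, huv⟩ :
      ∃ u ∈ U \ {c₀}, ∃ v ∈ U \ {c₀}, ¬ G.ReachIn (U \ {c₀}) u v := by
    by_contra! h
    exact hnc ⟨hne, h⟩
  by_cases hxu : x ∈ G.compIn (U \ {c₀}) u
  · exact ⟨_, isComponentIn_compIn hv, fun hxv => huv (hxu.2.trans hxv.2.symm), u, hu,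
      fun hu' => huv hu'.2.symm⟩
  · exact ⟨_, isComponentIn_compIn hu, hxu, v, hv, fun hv' => huv hv'.2⟩

theorem outcome [Finite V] (hU : G.ConnectedOn U) (hx : x ∈ U) (h2 : 2 ≤ U.ncard) :
    G.HasCliqueLeaf U x ∨ G.HasRemovableP3 U x ∨ G.HasCliqueCut U x := by
  induction hn : U.ncard using Nat.strong_induction_on generalizing U x with
  | _ n ih =>
  by_cases h2c : ∀ u ∈ U, G.ConnectedOn (U \ {u})
  · exact outcome_of_connectedOn_diff hx h2c
  push Not at h2c
  obtain ⟨c₀, hc₀, hnc⟩ := h2c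
  obtain ⟨Y, hY, hxY, y, hy, hyY⟩ := exists_isComponentIn_notMem hc₀ h2 hnc x
  have hlt : (insert c₀ Y).ncard < n := hn ▸ Set.ncard_lt_ncard
    ⟨hY.insert_subset hc₀, fun h => (h hy.1).elim hy.2 hyY⟩
  have h2Y : 2 ≤ (insert c₀ Y).ncard := by
    rw [Set.ncard_insert_of_notMem hY.notMem]
    have := (Set.ncard_pos).2 hY.connectedOn.1
    omega
  rcases ih _ hlt (hY.connectedOn_insert hU hc₀) (Set.mem_insert c₀ Y) h2Y rfl with hA | hB | hC
  · exact Or.inl (hY.hasCliqueLeaf hc₀ hxY hA)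
  · exact Or.inr (Or.inl (hY.hasRemovableP3 hU hc₀ hxY hB))
  · exact Or.inr (Or.inr (hY.hasCliqueCut hU hc₀ hx hxY hC))

theorem reachable_induce_of_reachIn (hu : u ∈ S) (hr : G.ReachIn S u v) (hv : v ∈ S) :
    (G.induce S).Reachable ⟨u, hu⟩ ⟨v, hv⟩ := by
  induction hr with
  | refl => rfl
  | tail _ h ih => exact (ih h.1).trans (Adj.reachable (by exact h.2.2))

theorem reachIn_of_reachable_induce {a b : S} (h : (G.induce S).Reachable a b) :
    G.ReachIn S a b :=
  Relation.ReflTransGen.lift Subtype.val (fun p q hpq => ⟨p.2, q.2, hpq⟩) _ _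
    ((reachable_iff_reflTransGen a b).1 h)

theorem connectedOn_iff : G.ConnectedOn S ↔ (G.induce S).Connected := by
  refine ⟨fun ⟨⟨p, hp⟩, h⟩ => ?_, fun h => ?_⟩
  · have : Nonempty S := ⟨⟨p, hp⟩⟩
    exact ⟨fun a b => reachable_induce_of_reachIn a.2 (h a a.2 b b.2) b.2⟩
  · obtain ⟨p⟩ := h.nonempty
    exact ⟨⟨p, p.2⟩, fun a ha b hb =>
      reachIn_of_reachable_induce (h.preconnected ⟨a, ha⟩ ⟨b, hb⟩)⟩

theorem connectedOn_univ (h : G.Connected) : G.ConnectedOn Set.univ :=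
  ⟨⟨h.nonempty.some, trivial⟩, fun u _ v _ => Relation.ReflTransGen.mono
    (fun _ _ hpq => ⟨trivial, trivial, hpq⟩) _ _
    ((reachable_iff_reflTransGen u v).1 (h.preconnected u v))⟩

theorem isComponentIn_univ_sdiff_iff : G.IsComponentIn (Set.univ \ S) X ↔ IsCompOf G S X :=
  ⟨fun h => ⟨Set.disjoint_left.2 fun _ hv => (h.subset hv).2, connectedOn_iff.1 h.connectedOn,
      fun v hv w hvw hw => h.isClosedIn v hv w ⟨trivial, hw⟩ hvw⟩,
    fun h => ⟨fun _ hv => ⟨trivial, Set.disjoint_left.1 h.1 hv⟩, connectedOn_iff.2 h.2.1,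
      fun v hv w hw hvw => h.2.2 v hv w hvw hw.2⟩⟩

end SimpleGraph

open SimpleGraph in
/-- structural lemma. For any connected simple graph `Q` with at
least two vertices, at least one of the following holds:
(A) some connected component of `Q − v` is a clique, for some vertex `v`;
(B) there are distinct vertices `a, b, c` inducing a path `P₃` (exactly the edges
`ab`, `bc`) such that `Q − {a,b,c}` is connected;
(C) there are nonadjacent vertices `v, b` such that `Q − {v,b}` is disconnected and
all connected components `X` of `Q − {v,b}`, except possibly one, are such that both
`Q[X ∪ {v}]` and `Q[X ∪ {b}]` are cliques. -/
theorem stmt8 {V : Type*} [Fintype V] (Q : SimpleGraph V) (hconn : Q.Connected)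
    (hcard : 2 ≤ Fintype.card V) :
    (∃ (v : V) (X : Set V), IsCompOf Q {v} X ∧ Q.IsClique X) ∨
    (∃ a b c : V, a ≠ b ∧ b ≠ c ∧ a ≠ c ∧
      Q.Adj a b ∧ Q.Adj b c ∧ ¬ Q.Adj a c ∧
      (Q.induce ({a, b, c}ᶜ : Set V)).Connected) ∨
    (∃ v b : V, v ≠ b ∧ ¬ Q.Adj v b ∧
      ¬ (Q.induce ({v, b}ᶜ : Set V)).Connected ∧
      ∃ X₀ : Set V, ∀ X : Set V, IsCompOf Q {v, b} X → X ≠ X₀ →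
        Q.IsClique (X ∪ {v}) ∧ Q.IsClique (X ∪ {b})) := by
  obtain ⟨x⟩ : Nonempty V := Fintype.card_pos_iff.1 (by omega)
  have h2 : 2 ≤ (Set.univ : Set V).ncard := by rwa [Set.ncard_univ, Nat.card_eq_fintype_card]
  rcases outcome (connectedOn_univ hconn) (Set.mem_univ x) h2 with
    ⟨u, -, X, hX, hXc, -⟩ | ⟨a, b, c, hP, hc⟩ | ⟨p, -, q, -, hpq, hnadj, hnc, hgood⟩
  · exact Or.inl ⟨u, X, isComponentIn_univ_sdiff_iff.1 hX, hXc⟩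
  · refine Or.inr (Or.inl ⟨a, b, c, hP.adj_left.ne, hP.adj_right.ne, hP.ne, hP.adj_left,
      hP.adj_right, hP.not_adj, ?_⟩)
    rwa [Set.compl_eq_univ_sdiff, ← connectedOn_iff]
  · refine Or.inr (Or.inr ⟨p, q, hpq, hnadj, ?_, Q.compIn (Set.univ \ {p, q}) x,
      fun X hX hXx => ?_⟩)
    · rwa [Set.compl_eq_univ_sdiff, ← connectedOn_iff]
    · rw [← isComponentIn_univ_sdiff_iff] at hX
      simpa only [Set.union_singleton] using hgood X hX fun hx => hXx (hX.eq_compIn hx)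
end

section
/- Let G be a connected signed graph, v a vertex of G, and C the vertex set of a connected component of G−v such that G[C] is a clique containing no positive triangle. Suppose there exist distinct a, b ∈ C such that G−{a,b} is connected, a is adjacent to v, and b is not adjacent to v. Then β(G) − pt(G) ≥ β(G−{a,b}) − pt(G−{a,b}) + 1/2. -/
lemma card_cc_eq_one {V : Type*} {G : SimpleGraph V} (h : G.Connected) :
    Nat.card G.ConnectedComponent = 1 := by
  have hs := h.preconnected.subsingleton_connectedComponent
  have hne : Nonempty V := h.nonempty
  have : Nonempty G.ConnectedComponent := ⟨G.connectedComponentMk (Classical.arbitrary V)⟩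
  exact Nat.card_eq_one_iff_unique.mpr ⟨hs, this⟩

lemma signConsistent_pair {V : Type*} (sign : Sym2 V → Bool) (A : Set V) (x y : V) :
    SignConsistent sign A s(x, y) ↔ (sign s(x, y) = true ↔ (x ∈ A ↔ y ∈ A)) := by
  constructor
  · intro h; exact h x y rfl
  · intro h u w huw
    rw [Sym2.eq_iff] at huw
    rcases huw with ⟨rfl, rfl⟩ | ⟨rfl, rfl⟩
    · exact h
    · exact h.trans ⟨Iff.symm, Iff.symm⟩

lemma aux_av (S T : Prop) : S ↔ ((S ↔ T) ↔ T) := by tauto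

lemma aux_ab (S P : Prop) : S ↔ (P ↔ (S ↔ P)) := by tauto

lemma aux_dich (S p r : Prop) {Q : Prop} (key : (S ↔ (r ↔ p)) ↔ Q) : (S ↔ (p ↔ r)) ↔ Q := by
  tauto

lemma parity_aux (s1 s2 s3 : Bool) (p q r : Prop)
    (hodd : ¬ Even ((if s1 then 0 else 1) + (if s2 then 0 else 1) + (if s3 then 0 else 1)))
    (h1 : s1 = true ↔ (p ↔ q)) :
    ((s3 = true ↔ (r ↔ p)) ↔ ¬(s2 = true ↔ (q ↔ r))) := by
  cases s1 <;> cases s2 <;> cases s3 <;> simp_all [Nat.even_add] <;> tauto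

set_option maxHeartbeats 2000000 in
/-- safety of Rule 3. Let `G` be a connected signed graph, `v` a
vertex, and `C` the vertex set of a connected component of `G − v` such that `G[C]`
is a clique containing no positive triangle. If `a, b ∈ C` are distinct, `G − {a,b}`
is connected, `a` is adjacent to `v` and `b` is not, then
`β(G) − pt(G) ≥ β(G − {a,b}) − pt(G − {a,b}) + 1/2`. -/
theorem stmt11 {V : Type*} [Fintype V] (G : SimpleGraph V) (sign : Sym2 V → Bool)
    (hconn : G.Connected) (v : V) (C : Set V) (hC : IsCompOf G {v} C)
    (hclique : G.IsClique C)
    (htri : ¬ ∃ x y z : V, x ∈ C ∧ y ∈ C ∧ z ∈ C ∧ PositiveTriangle G sign x y z)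
    (a b : V) (ha : a ∈ C) (hb : b ∈ C) (hab : a ≠ b)
    (hrest : (G.induce ({a, b}ᶜ : Set V)).Connected)
    (hav : G.Adj a v) (hbv : ¬ G.Adj b v) :
    (beta G sign : ℚ) - pt G ≥
      (betaOn G sign ({a, b}ᶜ : Set V) : ℚ) - ptOn G ({a, b}ᶜ : Set V) + 1 / 2 := by
  classical
  obtain ⟨hdisj, hCconn, hCclose⟩ := hC
  set U : Set V := ({a, b}ᶜ : Set V) with hU
  -- basic membership facts
  have hvC : v ∉ C := fun hv => (Set.disjoint_left.mp hdisj hv) rfl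
  have hva : v ≠ a := fun h => hvC (h ▸ ha)
  have hvb : v ≠ b := fun h => hvC (h ▸ hb)
  have memU : ∀ x : V, x ≠ a → x ≠ b → x ∈ U := by
    intro x h1 h2; simp [hU, h1, h2]
  have memU' : ∀ x : V, x ∈ U → x ≠ a ∧ x ≠ b := by
    intro x hx; simpa [hU] using hx
  have hvU : v ∈ U := memU v hva hvb
  -- neighbor facts
  have hNa : ∀ y, G.Adj a y → y = v ∨ (y ∈ C ∧ y ≠ a) := by
    intro y hy
    by_cases h : y = v
    · exact Or.inl h
    · exact Or.inr ⟨hCclose a ha y hy (by simp [h]), fun h' => G.irrefl (h' ▸ hy)⟩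
  have hNb : ∀ y, G.Adj b y → y ∈ C ∧ y ≠ b := by
    intro y hy
    by_cases h : y = v
    · exact absurd (h ▸ hy) hbv
    · exact ⟨hCclose b hb y hy (by simp [h]), fun h' => G.irrefl (h' ▸ hy)⟩
  have hadjab : G.Adj a b := hclique ha hb hab
  -- the optimal partition of the induced graph
  set sg' : Sym2 ↥U → Bool := fun e => sign (Sym2.map Subtype.val e) with hsg'
  have hbdd' : BddAbove {n | ∃ A : Set ↥U, n = balCount (G.induce U) sg' A} := by
    refine ⟨Nat.card (Sym2 ↥U), ?_⟩
    rintro n ⟨A, rfl⟩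
    calc balCount (G.induce U) sg' A ≤ (Set.univ : Set (Sym2 ↥U)).ncard :=
          Set.ncard_le_ncard (Set.subset_univ _) (Set.toFinite _)
      _ = _ := Set.ncard_univ _
  have hne' : {n | ∃ A : Set ↥U, n = balCount (G.induce U) sg' A}.Nonempty :=
    ⟨balCount (G.induce U) sg' ∅, ⟨∅, rfl⟩⟩
  have hbetamem : ∃ A' : Set ↥U, beta (G.induce U) sg' = balCount (G.induce U) sg' A' :=
    Nat.sSup_mem hne' hbdd'
  obtain ⟨A', hA'⟩ := hbetamem
  set A0 : Set V := Subtype.val '' A' with hA0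
  -- the extended partition
  set A : Set V := {x | (x ∈ A0 ∧ x ≠ a ∧ x ≠ b) ∨
      (x = a ∧ (sign s(a, v) = true ↔ v ∈ A0)) ∨
      (x = b ∧ (sign s(a, b) = true ↔ (sign s(a, v) = true ↔ v ∈ A0)))} with hA
  have haA : a ∈ A ↔ (sign s(a, v) = true ↔ v ∈ A0) := by
    rw [hA]
    constructor
    · rintro (⟨_, h, _⟩ | ⟨_, h⟩ | ⟨h, _⟩)
      · exact absurd rfl h
      · exact h
      · exact absurd h hab
    · intro h; exact Or.inr (Or.inl ⟨rfl, h⟩)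
  have hbA : b ∈ A ↔ (sign s(a, b) = true ↔ (sign s(a, v) = true ↔ v ∈ A0)) := by
    rw [hA]
    constructor
    · rintro (⟨_, _, h⟩ | ⟨h, _⟩ | ⟨_, h⟩)
      · exact absurd rfl h
      · exact absurd h.symm hab
      · exact h
    · intro h; exact Or.inr (Or.inr ⟨rfl, h⟩)
  have hxA : ∀ x : V, x ≠ a → x ≠ b → (x ∈ A ↔ x ∈ A0) := by
    intro x h1 h2
    rw [hA]
    constructor
    · rintro (⟨h, _, _⟩ | ⟨h, _⟩ | ⟨h, _⟩)
      · exact h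
      · exact absurd h h1
      · exact absurd h h2
    · intro h; exact Or.inl ⟨h, h1, h2⟩
  have hA0mem : ∀ x : ↥U, (↑x ∈ A0 ↔ x ∈ A') := by
    intro x
    rw [hA0]
    exact Subtype.val_injective.mem_set_image
  have hA0U : A0 ⊆ U := by
    rw [hA0]
    rintro _ ⟨x, _, rfl⟩
    exact x.2
  have hsg : ∀ x y : ↥U, sg' s(x, y) = sign s((x : V), (y : V)) := fun _ _ => rfl

  -- consistency of the two special edges
  have cons_av : SignConsistent sign A s(a, v) := by
    rw [signConsistent_pair, haA, hxA v hva hvb]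
    exact aux_av _ _
  have cons_ab : SignConsistent sign A s(a, b) := by
    rw [signConsistent_pair, haA, hbA]
    exact aux_ab _ _
  -- the triangle dichotomy
  have hdich : ∀ c : V, c ∈ C → c ≠ a → c ≠ b →
      (SignConsistent sign A s(a, c) ↔ ¬ SignConsistent sign A s(b, c)) := by
    intro c hc hca hcb
    have hbc : G.Adj b c := hclique hb hc (Ne.symm hcb)
    have hcad : G.Adj c a := hclique hc ha hca
    have hodd : ¬ Even ((if sign s(a, b) then 0 else 1) + (if sign s(b, c) then 0 else 1) +
        (if sign s(c, a) then 0 else 1)) := by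
      intro hev
      exact htri ⟨a, b, c, ha, hb, hc, hadjab, hbc, hcad, hev⟩
    have h1 : sign s(a, b) = true ↔ (a ∈ A ↔ b ∈ A) := (signConsistent_pair _ _ _ _).mp cons_ab
    have key := parity_aux (sign s(a, b)) (sign s(b, c)) (sign s(c, a))
      (a ∈ A) (b ∈ A) (c ∈ A) hodd h1
    rw [signConsistent_pair, signConsistent_pair,
      show s(a, c) = s(c, a) from Sym2.eq_swap]
    exact aux_dich _ _ _ key
  -- the shape of edges incident to {a, b}
  have hshape : ∀ e : Sym2 V, e ∈ G.edgeSet → (a ∈ e ∨ b ∈ e) →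
      e = s(a, v) ∨ e = s(a, b) ∨
        ∃ c, c ∈ C ∧ c ≠ a ∧ c ≠ b ∧ (e = s(a, c) ∨ e = s(b, c)) := by
    intro e
    induction e using Sym2.ind with
    | _ x y =>
      intro he hm
      rw [SimpleGraph.mem_edgeSet] at he
      have main : ∀ z w : V, G.Adj z w → (z = a ∨ z = b) →
          s(z, w) = s(a, v) ∨ s(z, w) = s(a, b) ∨
            ∃ c, c ∈ C ∧ c ≠ a ∧ c ≠ b ∧ (s(z, w) = s(a, c) ∨ s(z, w) = s(b, c)) := by
        intro z w hzw hz
        rcases hz with rfl | rfl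
        · rcases hNa w hzw with rfl | ⟨hwC, hwa⟩
          · exact Or.inl rfl
          · by_cases hwb : w = b
            · exact Or.inr (Or.inl (by rw [hwb]))
            · exact Or.inr (Or.inr ⟨w, hwC, hwa, hwb, Or.inl rfl⟩)
        · obtain ⟨hwC, hwb⟩ := hNb w hzw
          by_cases hwa : w = a
          · subst hwa
            exact Or.inr (Or.inl Sym2.eq_swap)
          · exact Or.inr (Or.inr ⟨w, hwC, hwa, hwb, Or.inr rfl⟩)
      simp only [Sym2.mem_iff] at hm
      rcases hm with (h | h) | (h | h)
      · exact main x y he (Or.inl h.symm)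
      · rw [Sym2.eq_swap]; exact main y x he.symm (Or.inl h.symm)
      · exact main x y he (Or.inr h.symm)
      · rw [Sym2.eq_swap]; exact main y x he.symm (Or.inr h.symm)
  -- Sat and Unsat
  set Sat : Set (Sym2 V) := {e | (e ∈ G.edgeSet ∧ (a ∈ e ∨ b ∈ e)) ∧ SignConsistent sign A e}
    with hSat
  set Unsat : Set (Sym2 V) :=
    {e | (e ∈ G.edgeSet ∧ (a ∈ e ∨ b ∈ e)) ∧ ¬ SignConsistent sign A e} with hUnsat
  have havSat : s(a, v) ∈ Sat := ⟨⟨hav, Or.inl (Sym2.mem_mk_left a v)⟩, cons_av⟩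
  have habSat : s(a, b) ∈ Sat := ⟨⟨hadjab, Or.inl (Sym2.mem_mk_left a b)⟩, cons_ab⟩
  have havab : s(a, v) ≠ s(a, b) := by
    rw [Ne, Sym2.eq_iff]
    rintro (⟨-, h⟩ | ⟨h, -⟩)
    · exact hvb h
    · exact hab h
  -- the swap injection from Unsat into Sat minus the two special edges
  have hswap : ∀ e ∈ Unsat, Sym2.map (Equiv.swap a b) e ∈ Sat \ {s(a, v), s(a, b)} := by
    intro e he
    obtain ⟨⟨heE, hm⟩, hcons⟩ := he
    rcases hshape e heE hm with rfl | rfl | ⟨c, hc, hca, hcb, rfl | rfl⟩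
    · exact absurd cons_av hcons
    · exact absurd cons_ab hcons
    · have hbcons : SignConsistent sign A s(b, c) := by
        by_contra h
        exact hcons ((hdich c hc hca hcb).mpr h)
      have hmap : Sym2.map (Equiv.swap a b) s(a, c) = s(b, c) := by
        rw [Sym2.map_pair_eq, Equiv.swap_apply_left, Equiv.swap_apply_of_ne_of_ne hca hcb]
      rw [hmap]
      refine ⟨⟨⟨hclique hb hc (Ne.symm hcb), Or.inr (Sym2.mem_mk_left b c)⟩, hbcons⟩, ?_⟩
      intro hmem
      simp only [Set.mem_insert_iff, Set.mem_singleton_iff] at hmem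
      rcases hmem with h | h <;> rw [Sym2.eq_iff] at h <;>
        rcases h with ⟨h1, -⟩ | ⟨-, h2⟩
      · exact hab h1.symm
      · exact hca h2
      · exact hab h1.symm
      · exact hca h2
    · have hacons : SignConsistent sign A s(a, c) := (hdich c hc hca hcb).mpr hcons
      have hmap : Sym2.map (Equiv.swap a b) s(b, c) = s(a, c) := by
        rw [Sym2.map_pair_eq, Equiv.swap_apply_right, Equiv.swap_apply_of_ne_of_ne hca hcb]
      rw [hmap]
      refine ⟨⟨⟨hclique ha hc (Ne.symm hca), Or.inl (Sym2.mem_mk_left a c)⟩, hacons⟩, ?_⟩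
      intro hmem
      simp only [Set.mem_insert_iff, Set.mem_singleton_iff] at hmem
      rcases hmem with h | h <;> rw [Sym2.eq_iff] at h
      · rcases h with ⟨-, h2⟩ | ⟨h1, -⟩
        · exact hvC (h2 ▸ hc)
        · exact hva h1.symm
      · rcases h with ⟨-, h2⟩ | ⟨h1, -⟩
        · exact hcb h2
        · exact hab h1
  have hUnsatcard : Unsat.ncard + 2 ≤ Sat.ncard := by
    have hsub2 : ({s(a, v), s(a, b)} : Set (Sym2 V)) ⊆ Sat :=
      Set.insert_subset havSat (Set.singleton_subset_iff.mpr habSat)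
    have h1 : Unsat.ncard ≤ (Sat \ {s(a, v), s(a, b)}).ncard :=
      Set.ncard_le_ncard_of_injOn (Sym2.map (Equiv.swap a b)) hswap
        ((Sym2.map.injective (Equiv.swap a b).injective).injOn) (Set.toFinite _)
    have h2 : (Sat \ ({s(a, v), s(a, b)} : Set (Sym2 V))).ncard +
        ({s(a, v), s(a, b)} : Set (Sym2 V)).ncard = Sat.ncard :=
      Set.ncard_diff_add_ncard_of_subset hsub2 (Set.toFinite _)
    rw [Set.ncard_pair havab] at h2
    omega
  -- the embedding of the small edge set
  have hinj : Function.Injective (Sym2.map (Subtype.val : ↥U → V)) :=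
    Sym2.map.injective Subtype.val_injective
  have hback : ∀ e' : Sym2 ↥U, e' ∈ (G.induce U).edgeSet →
      Sym2.map Subtype.val e' ∈ G.edgeSet ∧
        ¬(a ∈ Sym2.map Subtype.val e' ∨ b ∈ Sym2.map Subtype.val e') := by
    intro e'
    induction e' using Sym2.ind with
    | _ x y =>
      intro he'
      rw [SimpleGraph.mem_edgeSet] at he'
      have hx := memU' ↑x x.2
      have hy := memU' ↑y y.2
      constructor
      · rw [Sym2.map_pair_eq, SimpleGraph.mem_edgeSet]; exact he'
      · rw [Sym2.map_pair_eq]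
        simp only [Sym2.mem_iff]
        push_neg
        exact ⟨⟨fun h => hx.1 h.symm, fun h => hy.1 h.symm⟩,
          fun h => hx.2 h.symm, fun h => hy.2 h.symm⟩
  have hfwd : ∀ e : Sym2 V, e ∈ G.edgeSet → ¬(a ∈ e ∨ b ∈ e) →
      e ∈ Sym2.map (Subtype.val : ↥U → V) '' (G.induce U).edgeSet := by
    intro e
    induction e using Sym2.ind with
    | _ x y =>
      intro he hm
      rw [SimpleGraph.mem_edgeSet] at he
      simp only [Sym2.mem_iff] at hm
      push_neg at hm
      obtain ⟨⟨hax, hay⟩, hbx, hby⟩ := hm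
      refine ⟨s(⟨x, memU x (Ne.symm hax) (Ne.symm hbx)⟩,
        ⟨y, memU y (Ne.symm hay) (Ne.symm hby)⟩), ?_, ?_⟩
      · rw [SimpleGraph.mem_edgeSet]; exact he
      · rw [Sym2.map_pair_eq]
  -- edge count decomposition
  have hmcount : G.edgeSet.ncard = (G.induce U).edgeSet.ncard + (Sat.ncard + Unsat.ncard) := by
    have hunion : G.edgeSet =
        (Sym2.map (Subtype.val : ↥U → V) '' (G.induce U).edgeSet) ∪ (Sat ∪ Unsat) := by
      ext e
      constructor
      · intro he
        by_cases hm : a ∈ e ∨ b ∈ e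
        · by_cases hc : SignConsistent sign A e
          · exact Or.inr (Or.inl ⟨⟨he, hm⟩, hc⟩)
          · exact Or.inr (Or.inr ⟨⟨he, hm⟩, hc⟩)
        · exact Or.inl (hfwd e he hm)
      · rintro (⟨e', he', rfl⟩ | ⟨⟨he, -⟩, -⟩ | ⟨⟨he, -⟩, -⟩)
        · exact (hback e' he').1
        · exact he
        · exact he
    have hd1 : Disjoint (Sym2.map (Subtype.val : ↥U → V) '' (G.induce U).edgeSet)
        (Sat ∪ Unsat) := by
      rw [Set.disjoint_left]
      rintro e ⟨e', he', rfl⟩ (⟨⟨-, hm⟩, -⟩ | ⟨⟨-, hm⟩, -⟩) <;> exact (hback e' he').2 hm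
    have hd2 : Disjoint Sat Unsat := by
      rw [Set.disjoint_left]
      rintro e ⟨-, hc⟩ ⟨-, hc'⟩
      exact hc' hc
    rw [hunion, Set.ncard_union_eq hd1 (Set.toFinite _) (Set.toFinite _),
      Set.ncard_union_eq hd2 (Set.toFinite _) (Set.toFinite _),
      Set.ncard_image_of_injective _ hinj]
  -- vertex count
  have hncard : Nat.card V = Nat.card ↥U + 2 := by
    have h2 : ({a, b} : Set V).ncard = 2 := Set.ncard_pair hab
    have h3 : ({a, b} : Set V).ncard + (({a, b} : Set V)ᶜ).ncard = Nat.card V :=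
      Set.ncard_add_ncard_compl _
    rw [Nat.card_coe_set_eq, hU]
    omega
  -- pt relation
  have hccG : Nat.card G.ConnectedComponent = 1 := card_cc_eq_one hconn
  have hccU : Nat.card (G.induce U).ConnectedComponent = 1 := card_cc_eq_one hrest
  have hptG : pt G = pt (G.induce U) + ((Sat.ncard : ℚ) + Unsat.ncard) / 2 + 1 / 2 := by
    unfold pt
    rw [hccG, hccU, hmcount, hncard]
    push_cast
    ring
  -- consistency transfer for induced edges
  have htrans : ∀ e' : Sym2 ↥U, e' ∈ (G.induce U).edgeSet → SignConsistent sg' A' e' →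
      SignConsistent sign A (Sym2.map Subtype.val e') := by
    intro e'
    induction e' using Sym2.ind with
    | _ x y =>
      intro _ hc'
      rw [signConsistent_pair] at hc'
      rw [Sym2.map_pair_eq, signConsistent_pair, ← hsg x y]
      have hx := memU' ↑x x.2
      have hy := memU' ↑y y.2
      rw [hxA ↑x hx.1 hx.2, hxA ↑y hy.1 hy.2, hA0mem x, hA0mem y]
      exact hc'
  -- balCount lower bound
  have hbal : balCount (G.induce U) sg' A' + Sat.ncard ≤ balCount G sign A := by
    have hdisj3 : Disjoint (Sym2.map (Subtype.val : ↥U → V) ''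
        {e | e ∈ (G.induce U).edgeSet ∧ SignConsistent sg' A' e}) Sat := by
      rw [Set.disjoint_left]
      rintro e ⟨e', ⟨he', -⟩, rfl⟩ ⟨⟨-, hm⟩, -⟩
      exact (hback e' he').2 hm
    have hsubset : (Sym2.map (Subtype.val : ↥U → V) ''
        {e | e ∈ (G.induce U).edgeSet ∧ SignConsistent sg' A' e}) ∪ Sat ⊆
        {e | e ∈ G.edgeSet ∧ SignConsistent sign A e} := by
      rintro e (⟨e', ⟨he', hc'⟩, rfl⟩ | ⟨⟨he, -⟩, hc⟩)
      · exact ⟨(hback e' he').1, htrans e' he' hc'⟩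
      · exact ⟨he, hc⟩
    calc balCount (G.induce U) sg' A' + Sat.ncard
        = (Sym2.map (Subtype.val : ↥U → V) ''
            {e | e ∈ (G.induce U).edgeSet ∧ SignConsistent sg' A' e}).ncard + Sat.ncard := by
          rw [Set.ncard_image_of_injective _ hinj]; rfl
      _ = ((Sym2.map (Subtype.val : ↥U → V) ''
            {e | e ∈ (G.induce U).edgeSet ∧ SignConsistent sg' A' e}) ∪ Sat).ncard :=
          (Set.ncard_union_eq hdisj3 (Set.toFinite _) (Set.toFinite _)).symm
      _ ≤ _ := Set.ncard_le_ncard hsubset (Set.toFinite _)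
  -- beta lower bound
  have hbddG : BddAbove {n | ∃ B : Set V, n = balCount G sign B} := by
    refine ⟨Nat.card (Sym2 V), ?_⟩
    rintro n ⟨B, rfl⟩
    calc balCount G sign B ≤ (Set.univ : Set (Sym2 V)).ncard :=
        Set.ncard_le_ncard (Set.subset_univ _) (Set.toFinite _)
      _ = _ := Set.ncard_univ _
  have hbetaG : balCount G sign A ≤ beta G sign := le_csSup hbddG ⟨A, rfl⟩
  -- conclusion
  have hbetaOn : betaOn G sign U = beta (G.induce U) sg' := rfl
  have hptOn : ptOn G U = pt (G.induce U) := rfl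
  rw [ge_iff_le, hbetaOn, hptOn, hA', hptG]
  have c1 : (balCount (G.induce U) sg' A' : ℚ) + Sat.ncard ≤ balCount G sign A := by
    exact_mod_cast hbal
  have c2 : (balCount G sign A : ℚ) ≤ beta G sign := by exact_mod_cast hbetaG
  have c3 : (Unsat.ncard : ℚ) + 2 ≤ Sat.ncard := by exact_mod_cast hUnsatcard
  linarith
end
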